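/- arXiv:2305.15133 — 11 statements merged into one kernel-verified Lean document; each statement's English description precedes it below -/
import Mathlib

section
/- Let k ≥ 2 and r ≥ 1 be integers. If c : ℕ → {1,…,r} is an exact r-coloring of the positive integers that is rainbow-free for the equation x − y = z^k, then the color c(1) is dominant; that is, for every i ∈ ℕ, if c(i) ≠ c(i+1) then c(i) = c(1) or c(i+1) = c(1). -/
/-- If `c` is an exact `r`-coloring of the positive integers that is
rainbow-free for `x - y = z^k` (`k ≥ 2`), then the color `c 1` is dominant. -/
theorem stmt_0 (k r : ℕ) (hk : 2 ≤ k) (hr : 1 ≤ r) (c : ℕ → Fin r)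
    (hexact : ∀ col : Fin r, ∃ i, 1 ≤ i ∧ c i = col)
    (hrf : ∀ b d : ℕ, 1 ≤ b → 1 ≤ d →
      ¬ (c (b + d ^ k) ≠ c b ∧ c (b + d ^ k) ≠ c d ∧ c b ≠ c d)) :
    ∀ i : ℕ, 1 ≤ i → c i ≠ c (i + 1) → c i = c 1 ∨ c (i + 1) = c 1 := by
  intro i hi hne
  have h := hrf i 1 hi le_rfl
  rw [one_pow] at h
  tauto
end

section
/- Let k ≥ 2 and let c : ℕ → {R, G, B} be an exact 3-coloring that is rainbow-free for x − y = z^k with dominant color R. Suppose c(j) = B, and suppose c(i) = c(i+1) = ⋯ = c(i+ℓ−1) = G (a G-monochromatic string at position i of length ℓ). Then the string of length ℓ at position i + j^k is monochromatic of color B or of color G; and if i − j^k ≥ 1, the string of length ℓ at position i − j^k is also monochromatic of color B or of color G. -/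
/-- Auxiliary: a string whose every element is colored `B` or `G` (neither equal
to the dominant color `R`) is monochromatic. -/
lemma aux_mono (R G B : Fin 3) (hRB : R ≠ B) (hRG : R ≠ G)
    (c : ℕ → Fin 3)
    (hdom : ∀ i : ℕ, 1 ≤ i → c i ≠ c (i + 1) → c i = R ∨ c (i + 1) = R)
    (p ℓ : ℕ) (hp : 1 ≤ p)
    (hin : ∀ h < ℓ, c (p + h) = B ∨ c (p + h) = G) :
    (∀ h < ℓ, c (p + h) = B) ∨ (∀ h < ℓ, c (p + h) = G) := by
  rcases Nat.eq_zero_or_pos ℓ with h0 | h0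
  · left; intro h hh; omega
  have hconst : ∀ h < ℓ, c (p + h) = c p := by
    intro h hh
    induction h with
    | zero => rfl
    | succ n ih =>
      have hn : n < ℓ := by omega
      have h1 : c (p + n) = c (p + n + 1) := by
        by_contra hne
        rcases hdom (p + n) (by omega) hne with hr | hr
        · rcases hin n hn with h' | h' <;> simp [h'] at hr <;>
            [exact hRB hr.symm; exact hRG hr.symm]
        · rcases hin (n + 1) hh with h' | h' <;>
            rw [show p + n + 1 = p + (n + 1) by omega, h'] at hr <;>
            [exact hRB hr.symm; exact hRG hr.symm]
      rw [show p + (n + 1) = p + n + 1 by omega, ← h1, ih hn]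
  rcases hin 0 h0 with h' | h'
  · left; intro h hh; rw [hconst h hh]; simpa using h'
  · right; intro h hh; rw [hconst h hh]; simpa using h'

/-- In a rainbow-free exact 3-coloring of the positive integers with
dominant color `R`, if `c j = B` and there is a `G`-monochromatic string at
position `i` of length `ℓ`, then the strings at positions `i + j^k` and
(when `i - j^k ≥ 1`) `i - j^k` of length `ℓ` are monochromatic of color `B` or `G`. -/
theorem stmt_1 (k : ℕ) (hk : 2 ≤ k) (R G B : Fin 3)
    (hRG : R ≠ G) (hRB : R ≠ B) (hGB : G ≠ B)
    (c : ℕ → Fin 3)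
    (hexact : ∀ col : Fin 3, ∃ i, 1 ≤ i ∧ c i = col)
    (hrf : ∀ b d : ℕ, 1 ≤ b → 1 ≤ d →
      ¬ (c (b + d ^ k) ≠ c b ∧ c (b + d ^ k) ≠ c d ∧ c b ≠ c d))
    (hdom : ∀ i : ℕ, 1 ≤ i → c i ≠ c (i + 1) → c i = R ∨ c (i + 1) = R)
    (j : ℕ) (hj : 1 ≤ j) (hcj : c j = B)
    (i ℓ : ℕ) (hi : 1 ≤ i) (hstr : ∀ h < ℓ, c (i + h) = G) :
    ((∀ h < ℓ, c (i + j ^ k + h) = B) ∨ (∀ h < ℓ, c (i + j ^ k + h) = G)) ∧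
    (j ^ k + 1 ≤ i →
      ((∀ h < ℓ, c (i - j ^ k + h) = B) ∨ (∀ h < ℓ, c (i - j ^ k + h) = G))) := by
  constructor
  · apply aux_mono R G B hRB hRG c hdom _ _ (by omega)
    intro h hh
    have := hrf (i + h) j (by omega) hj
    rw [hstr h hh, hcj, show i + h + j ^ k = i + j ^ k + h by omega] at this
    by_contra hc
    push_neg at hc
    exact this ⟨hc.2, hc.1, hGB⟩
  · intro hle
    apply aux_mono R G B hRB hRG c hdom _ _ (by omega)
    intro h hh
    have := hrf (i - j ^ k + h) j (by omega) hj
    rw [show i - j ^ k + h + j ^ k = i + h by omega, hstr h hh, hcj] at this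
    by_contra hc
    push_neg at hc
    exact this ⟨fun e => hc.2 e.symm, hGB, hc.1⟩
end

section
/- Let k ≥ 2 and let c : ℕ → {R, G, B} be an exact 3-coloring that is rainbow-free for x − y = z^k, with color classes ℛ, ℬ, 𝒢, and suppose that limsup_{n→∞} ( min{ℛ(n), ℬ(n), 𝒢(n)} − n/n₀ ) = ∞ for some integer n₀ ≥ 2. Then the lengths of monochromatic strings of the nondominant colors are bounded above; that is, there exists L such that every monochromatic string whose color is not the dominant color has length at most L. -/
open Filter

/-- In a rainbow-free exact 3-coloring of the positive integers
satisfying the density condition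
`limsup (min{ℛ(n), ℬ(n), 𝒢(n)} - n/n₀) = ∞` for some `n₀ ≥ 2`, the lengths of
monochromatic strings of the nondominant colors (i.e. colors other than the
dominant color `c 1`) are bounded above. -/
theorem stmt_2 (k : ℕ) (hk : 2 ≤ k) (R G B : Fin 3)
    (hRG : R ≠ G) (hRB : R ≠ B) (hGB : G ≠ B)
    (c : ℕ → Fin 3)
    (hexact : ∀ col : Fin 3, ∃ i, 1 ≤ i ∧ c i = col)
    (hrf : ∀ b d : ℕ, 1 ≤ b → 1 ≤ d →
      ¬ (c (b + d ^ k) ≠ c b ∧ c (b + d ^ k) ≠ c d ∧ c b ≠ c d))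
    (n₀ : ℕ) (hn₀ : 2 ≤ n₀)
    (hdens : ∀ M : ℝ, ∃ᶠ n in atTop,
      ((min (min (((Finset.Icc 1 n).filter (fun m => c m = R)).card)
                 (((Finset.Icc 1 n).filter (fun m => c m = B)).card))
            (((Finset.Icc 1 n).filter (fun m => c m = G)).card) : ℕ) : ℝ)
        - (n : ℝ) / (n₀ : ℝ) > M) :
    ∃ L : ℕ, ∀ (i ℓ : ℕ) (X : Fin 3), 1 ≤ i → X ≠ c 1 →
      (∀ h < ℓ, c (i + h) = X) → ℓ ≤ L := by
  classical
  -- dominance: adjacent differing colors involve c 1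
  have hdom : ∀ b, 1 ≤ b → ¬ (c (b + 1) ≠ c b ∧ c (b + 1) ≠ c 1 ∧ c b ≠ c 1) := by
    intro b hb
    have h := hrf b 1 hb le_rfl
    rwa [one_pow] at h
  -- any two distinct elements of Fin 3 miss some third element
  have hthird : ∀ X D : Fin 3, ∃ Y : Fin 3, Y ≠ X ∧ Y ≠ D := by decide
  -- `R G B` cover Fin 3
  have hcover : ∀ Z : Fin 3, Z = R ∨ Z = G ∨ Z = B := by
    have : ∀ R G B Z : Fin 3, R ≠ G → R ≠ B → G ≠ B → (Z = R ∨ Z = G ∨ Z = B) := by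
      decide
    exact fun Z => this R G B Z hRG hRB hGB
  obtain ⟨dR, hdR1, hdRc⟩ := hexact R
  obtain ⟨dG, hdG1, hdGc⟩ := hexact G
  obtain ⟨dB, hdB1, hdBc⟩ := hexact B
  refine ⟨dR ^ k + dG ^ k + dB ^ k, ?_⟩
  intro i ℓ X hi hX hstr
  by_contra hL
  push_neg at hL
  -- a third color Y, distinct from X and from the dominant color c 1
  obtain ⟨Y, hYX, hYD⟩ := hthird X (c 1)
  -- pick d ≥ 1 with c d = Y and d^k ≤ L
  obtain ⟨d, hd1, hdc, hdle⟩ :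
      ∃ d, 1 ≤ d ∧ c d = Y ∧ d ^ k ≤ dR ^ k + dG ^ k + dB ^ k := by
    rcases hcover Y with h | h | h
    · exact ⟨dR, hdR1, h ▸ hdRc,
        le_trans (Nat.le_add_right _ _) (Nat.le_add_right _ _)⟩
    · exact ⟨dG, hdG1, h ▸ hdGc,
        le_trans (Nat.le_add_left _ _) (Nat.le_add_right _ _)⟩
    · exact ⟨dB, hdB1, h ▸ hdBc, Nat.le_add_left _ _⟩
  set q := d ^ k with hqdef
  have hq1 : 1 ≤ q := Nat.one_le_pow _ _ hd1
  have hqℓ : q < ℓ := lt_of_le_of_lt hdle hL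
  -- every position ≥ i has color X
  have hall : ∀ h, c (i + h) = X := by
    intro h
    induction h using Nat.strong_induction_on with
    | _ h ih =>
      by_cases hcase : h < ℓ
      · exact hstr h hcase
      · have hh : ℓ ≤ h := le_of_not_gt hcase
        have hb : c (i + (h - q)) = X := ih (h - q) (by omega)
        have hprev : c (i + (h - 1)) = X := ih (h - 1) (by omega)
        have hrf' := hrf (i + (h - q)) d (by omega) hd1
        rw [← hqdef] at hrf'
        have he : i + (h - q) + q = i + h := by omega
        rw [he, hb, hdc] at hrf'
        have hXY : c (i + h) = X ∨ c (i + h) = Y := by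
          by_contra hcon
          push_neg at hcon
          exact hrf' ⟨hcon.1, hcon.2, fun e => hYX e.symm⟩
        rcases hXY with h' | h'
        · exact h'
        · exfalso
          have hdom' := hdom (i + (h - 1)) (by omega)
          have e1 : i + (h - 1) + 1 = i + h := by omega
          rw [e1, hprev, h'] at hdom'
          exact hdom' ⟨hYX, hYD, hX⟩
  -- hence every element of color Y is < i, so the Y-class is finite
  obtain ⟨n, hn⟩ := (hdens (i : ℝ)).exists
  have hminN : i < min (min (((Finset.Icc 1 n).filter (fun m => c m = R)).card)
                 (((Finset.Icc 1 n).filter (fun m => c m = B)).card))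
            (((Finset.Icc 1 n).filter (fun m => c m = G)).card) := by
    have h0 : (0 : ℝ) ≤ (n : ℝ) / (n₀ : ℝ) := by positivity
    have := hn
    have hr : (i : ℝ) < ((min (min (((Finset.Icc 1 n).filter (fun m => c m = R)).card)
                 (((Finset.Icc 1 n).filter (fun m => c m = B)).card))
            (((Finset.Icc 1 n).filter (fun m => c m = G)).card) : ℕ) : ℝ) := by
      linarith
    exact_mod_cast hr
  have hsub : (Finset.Icc 1 n).filter (fun m => c m = Y) ⊆ Finset.Icc 1 (i - 1) := by
    intro m hm
    simp only [Finset.mem_filter, Finset.mem_Icc] at hm ⊢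
    refine ⟨hm.1.1, ?_⟩
    by_contra hmi
    push_neg at hmi
    have hmX : c m = X := by
      have := hall (m - i)
      rwa [Nat.add_sub_cancel' (by omega : i ≤ m)] at this
    exact hYX (hm.2.symm.trans hmX)
  have hYle : ((Finset.Icc 1 n).filter (fun m => c m = Y)).card ≤ i - 1 := by
    have := Finset.card_le_card hsub
    simpa [Nat.card_Icc] using this
  rcases hcover Y with h | h | h <;> subst h <;> omega
end

section
/- Let k ≥ 2 and let c : ℕ → {R, G, B} be an exact 3-coloring that is rainbow-free for x − y = z^k with dominant color R, and suppose that limsup_{n→∞} ( min{ℛ(n), ℬ(n), 𝒢(n)} − n/n₀ ) = ∞ for some integer n₀ ≥ 2. If j₁ and j₂ are positive integers with c(j₁) = c(j₂) ≠ R and gcd(j₁, j₂) = 1, then at most one of j₁ and j₂ has the A-property. -/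
open Filter

/-- `j` has the A-property for the coloring `c` with dominant color `R`:
`c j` is nondominant and there is an infinite arithmetic progression with
common difference `j^k` that is monochromatic in the other nondominant color. -/
def HasAProperty (c : ℕ → Fin 3) (R : Fin 3) (k j : ℕ) : Prop :=
  c j ≠ R ∧ ∃ Y : Fin 3, Y ≠ R ∧ Y ≠ c j ∧
    ∃ i : ℕ, 1 ≤ i ∧ ∀ m : ℕ, c (i + m * j ^ k) = Y

private lemma fin3_unique : ∀ R C Y₁ Y₂ : Fin 3, C ≠ R → Y₁ ≠ R → Y₁ ≠ C →
    Y₂ ≠ R → Y₂ ≠ C → Y₂ = Y₁ := by decide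

/-- In a rainbow-free exact 3-coloring of the positive integers with
dominant color `R` satisfying the density condition, if `c j₁ = c j₂ ≠ R` and
`gcd(j₁, j₂) = 1`, then at most one of `j₁` and `j₂` has the A-property. -/
theorem stmt_3 (k : ℕ) (hk : 2 ≤ k) (R G B : Fin 3)
    (hRG : R ≠ G) (hRB : R ≠ B) (hGB : G ≠ B)
    (c : ℕ → Fin 3)
    (hexact : ∀ col : Fin 3, ∃ i, 1 ≤ i ∧ c i = col)
    (hrf : ∀ b d : ℕ, 1 ≤ b → 1 ≤ d →
      ¬ (c (b + d ^ k) ≠ c b ∧ c (b + d ^ k) ≠ c d ∧ c b ≠ c d))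
    (hdom : ∀ i : ℕ, 1 ≤ i → c i ≠ c (i + 1) → c i = R ∨ c (i + 1) = R)
    (n₀ : ℕ) (hn₀ : 2 ≤ n₀)
    (hdens : ∀ M : ℝ, ∃ᶠ n in atTop,
      ((min (min (((Finset.Icc 1 n).filter (fun m => c m = R)).card)
                 (((Finset.Icc 1 n).filter (fun m => c m = B)).card))
            (((Finset.Icc 1 n).filter (fun m => c m = G)).card) : ℕ) : ℝ)
        - (n : ℝ) / (n₀ : ℝ) > M)
    (j₁ j₂ : ℕ) (hj₁ : 1 ≤ j₁) (hj₂ : 1 ≤ j₂)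
    (hcol : c j₁ = c j₂) (hnotR : c j₁ ≠ R) (hcop : Nat.Coprime j₁ j₂) :
    ¬ (HasAProperty c R k j₁ ∧ HasAProperty c R k j₂) := by
  rintro ⟨⟨-, Y₁, hY₁R, hY₁C, i₁, hi₁, hAP1⟩, -, Y₂, hY₂R, hY₂C, i₂, hi₂, hAP2⟩
  rw [← hcol] at hY₂C
  have hYeq : Y₂ = Y₁ := fin3_unique R (c j₁) Y₁ Y₂ hnotR hY₁R hY₁C hY₂R hY₂C
  rw [hYeq] at hAP2 hY₂R hY₂C
  set a := j₁ ^ k with ha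
  set b := j₂ ^ k with hb
  have ha1 : 1 ≤ a := Nat.one_le_pow k j₁ hj₁
  have hb1 : 1 ≤ b := Nat.one_le_pow k j₂ hj₂
  have hco : Nat.Coprime a b := by rw [ha, hb]; exact Nat.Coprime.pow k k hcop
  have hcj₂ : c j₂ = c j₁ := hcol.symm
  -- From a Y element, stepping by b stays in {Y, C}.
  have hstep : ∀ u, 1 ≤ u → c u = Y₁ → c (u + b) = Y₁ ∨ c (u + b) = c j₁ := by
    intro u hu hcu
    have h := hrf u j₂ hu hj₂
    by_cases h1 : c (u + b) = Y₁
    · exact Or.inl h1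
    · right
      by_contra h2
      exact h ⟨by rw [hcu]; exact h1, by rw [hcj₂]; exact h2,
        by rw [hcu, hcj₂]; exact hY₁C⟩
  -- Main claim: for each t, all large n ≡ i₂ + t (mod b) are colored Y₁.
  have main : ∀ t : ℕ, ∃ N : ℕ, ∀ n, N ≤ n → n % b = (i₂ + t) % b → c n = Y₁ := by
    intro t
    induction t with
    | zero =>
      refine ⟨i₂, fun n hn hmod => ?_⟩
      have hme : i₂ ≡ n [MOD b] := by
        show i₂ % b = n % b
        simpa using hmod.symm
      obtain ⟨m, hm⟩ := (Nat.modEq_iff_dvd' hn).mp hme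
      rw [mul_comm b m] at hm
      have hne : n = i₂ + m * b := by omega
      rw [hne]
      exact hAP2 m
    | succ t ih =>
      obtain ⟨N, hN⟩ := ih
      set M : ℕ := i₁ + N + 1 with hM
      refine ⟨(M + 1) * (a * b), fun n hn hmod => ?_⟩
      set zc := Nat.chineseRemainder hco i₁ n with hzc
      have hz1 : (zc : ℕ) ≡ i₁ [MOD a] := zc.2.1
      have hz2 : (zc : ℕ) ≡ n [MOD b] := zc.2.2
      have hzlt : (zc : ℕ) < a * b :=
        Nat.chineseRemainder_lt_mul hco i₁ n (by omega) (by omega)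
      set x := (zc : ℕ) + M * (a * b) with hx
      have hab1 : 1 ≤ a * b := Nat.mul_pos ha1 hb1
      have hMab : M ≤ M * (a * b) := Nat.le_mul_of_pos_right M (by omega)
      have hxM : M ≤ x := by omega
      have hmul : (M + 1) * (a * b) = M * (a * b) + a * b := by ring
      have hxn : x ≤ n := by omega
      have hxa : x % a = i₁ % a := by
        have hrw : x = (zc : ℕ) + (M * b) * a := by rw [hx]; ring
        rw [hrw, Nat.add_mul_mod_self_right]
        exact hz1
      have hxb : x % b = n % b := by
        have hrw : x = (zc : ℕ) + (M * a) * b := by rw [hx]; ring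
        rw [hrw, Nat.add_mul_mod_self_right]
        exact hz2
      -- the sub-induction along steps of b
      have sub : ∀ r : ℕ, c (x + r * b) = Y₁ := by
        intro r
        induction r with
        | zero =>
          have hxi : i₁ ≤ x := by omega
          have hme : i₁ ≡ x [MOD a] := by
            show i₁ % a = x % a
            exact hxa.symm
          obtain ⟨m, hm⟩ := (Nat.modEq_iff_dvd' hxi).mp hme
          rw [mul_comm a m] at hm
          have hxe : x + 0 * b = i₁ + m * a := by omega
          rw [hxe]
          exact hAP1 m
        | succ r ihr =>
          have hu1 : 1 ≤ x + r * b := by omega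
          have heq : x + (r + 1) * b = (x + r * b) + b := by ring
          rcases hstep (x + r * b) hu1 ihr with hv | hv
          · rw [heq]; exact hv
          · exfalso
            set w := x + r * b + b - 1 with hw
            have hw1 : 1 ≤ w := by omega
            have hwv : w + 1 = x + r * b + b := by omega
            have hwN : N ≤ w := by omega
            have hwmod : w % b = (i₂ + t) % b := by
              have h1 : (w + 1) % b = x % b := by
                have hrw : w + 1 = x + (r + 1) * b := by rw [hwv]; ring
                rw [hrw, Nat.add_mul_mod_self_right]
              have h2 : (w + 1) % b = ((i₂ + t) + 1) % b := by
                rw [h1, hxb, hmod]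
                congr 1
              exact Nat.ModEq.add_right_cancel' 1 h2
            have hcw : c w = Y₁ := hN w hwN hwmod
            have hcw1 : c (w + 1) = c j₁ := by rw [hwv]; exact hv
            have hne : c w ≠ c (w + 1) := by
              rw [hcw, hcw1]; exact hY₁C
            rcases hdom w hw1 hne with h | h
            · rw [hcw] at h; exact hY₁R h
            · rw [hcw1] at h; exact hnotR h
      -- conclude for n
      have hdb : b ∣ n - x := by
        have hme : x ≡ n [MOD b] := hxb
        exact (Nat.modEq_iff_dvd' hxn).mp hme
      obtain ⟨r, hr⟩ := hdb
      rw [mul_comm b r] at hr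
      have hne : n = x + r * b := by omega
      rw [hne]
      exact sub r
  choose Nf hNf using main
  set N0 := (Finset.range b).sup Nf + i₂ + 1 with hN0
  have hallY : ∀ n, N0 ≤ n → c n = Y₁ := by
    intro n hn
    have hi2n : i₂ ≤ n := by omega
    have htlt : (n - i₂) % b < b := Nat.mod_lt _ (by omega)
    refine hNf ((n - i₂) % b) n ?_ ?_
    · have := Finset.le_sup (f := Nf) (Finset.mem_range.mpr htlt)
      omega
    · have h1 : (i₂ + (n - i₂) % b) ≡ i₂ + (n - i₂) [MOD b] :=
        Nat.ModEq.add_left _ (Nat.mod_modEq _ _)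
      have h2 : i₂ + (n - i₂) = n := by omega
      rw [h2] at h1
      exact h1.symm
  -- contradiction with the density hypothesis
  obtain ⟨n, hnlarge⟩ := (hdens (N0 : ℝ)).exists
  have hsub : ((Finset.Icc 1 n).filter (fun m => c m = R)).card ≤ N0 := by
    have hsubset : (Finset.Icc 1 n).filter (fun m => c m = R) ⊆ Finset.Icc 1 N0 := by
      intro m hm
      simp only [Finset.mem_filter, Finset.mem_Icc] at hm ⊢
      refine ⟨hm.1.1, ?_⟩
      by_contra hcon
      have hmN : N0 ≤ m := by omega
      have hYm := hallY m hmN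
      rw [hm.2] at hYm
      exact hY₁R hYm.symm
    calc ((Finset.Icc 1 n).filter (fun m => c m = R)).card
        ≤ (Finset.Icc 1 N0).card := Finset.card_le_card hsubset
      _ = N0 := by rw [Nat.card_Icc]; omega
  have hminle' : min (min (((Finset.Icc 1 n).filter (fun m => c m = R)).card)
                 (((Finset.Icc 1 n).filter (fun m => c m = B)).card))
            (((Finset.Icc 1 n).filter (fun m => c m = G)).card) ≤ N0 :=
    le_trans (le_trans (min_le_left _ _) (min_le_left _ _)) hsub
  have hcast : ((min (min (((Finset.Icc 1 n).filter (fun m => c m = R)).card)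
                 (((Finset.Icc 1 n).filter (fun m => c m = B)).card))
            (((Finset.Icc 1 n).filter (fun m => c m = G)).card) : ℕ) : ℝ) ≤ (N0 : ℝ) := by
    exact_mod_cast hminle'
  have hdiv : (0 : ℝ) ≤ (n : ℝ) / (n₀ : ℝ) :=
    div_nonneg (Nat.cast_nonneg n) (Nat.cast_nonneg n₀)
  linarith
end

section
/- Let k ≥ 2 and set s = ⌊k/2⌋. Let c : ℕ → {R, G, B} be an exact 3-coloring that is rainbow-free for x − y = z^k, with dominant color R and color classes ℛ, ℬ, 𝒢, satisfying limsup_{n→∞} ( min{ℛ(n), ℬ(n), 𝒢(n)} − n·(4^s − 1)/(3·4^s) ) = ∞. Then the color class ℬ contains a pair of relatively prime integers and the color class 𝒢 contains a pair of relatively prime integers. -/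
open Filter

lemma aux_fin3 (R G B v : Fin 3) (hRG : R ≠ G) (hRB : R ≠ B) (hGB : G ≠ B) :
    v = R ∨ v = G ∨ v = B := by
  by_contra h
  push_neg at h
  obtain ⟨h1, h2, h3⟩ := h
  have e1 : v.val ≠ R.val := Fin.val_injective.ne h1
  have e2 : v.val ≠ G.val := Fin.val_injective.ne h2
  have e3 : v.val ≠ B.val := Fin.val_injective.ne h3
  have f1 : R.val ≠ G.val := Fin.val_injective.ne hRG
  have f2 : R.val ≠ B.val := Fin.val_injective.ne hRB
  have f3 : G.val ≠ B.val := Fin.val_injective.ne hGB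
  have := v.isLt; have := R.isLt; have := G.isLt; have := B.isLt
  omega

lemma card_no_consec {n : ℕ} (A : Finset ℕ) (hA : A ⊆ Finset.Icc 1 n)
    (h : ∀ x ∈ A, x + 1 ∉ A) : A.card ≤ (n + 1) / 2 := by
  have hle : A.card ≤ (Finset.Icc 1 ((n + 1) / 2)).card := by
    apply Finset.card_le_card_of_injOn (fun x => (x + 1) / 2)
    · intro x hx
      have := hA hx
      simp only [Finset.mem_coe, Finset.mem_Icc] at this ⊢
      omega
    · intro x hx y hy hxy
      simp only at hxy
      have hcases : x = y ∨ x + 1 = y ∨ y + 1 = x := by omega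
      rcases hcases with h' | h' | h'
      · exact h'
      · exact absurd (h' ▸ hy) (h x hx)
      · exact absurd (h' ▸ hx) (h y hy)
  simpa using hle

lemma card_evens (m : ℕ) : ((Finset.Icc 1 m).filter (fun x => 2 ∣ x)).card = m / 2 := by
  induction m with
  | zero => simp
  | succ m ih =>
    rw [show Finset.Icc 1 (m+1) = insert (m+1) (Finset.Icc 1 m) by
        ext x; simp [Finset.mem_Icc]; omega, Finset.filter_insert]
    by_cases h2 : 2 ∣ (m + 1)
    · rw [if_pos h2, Finset.card_insert_of_notMem (by simp)]
      omega
    · rw [if_neg h2]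
      omega

lemma cop_succ (n : ℕ) : Nat.Coprime n (n + 1) := by
  show Nat.gcd n (n + 1) = 1
  rw [show n + 1 = 1 + n by ring, Nat.gcd_add_self_right]
  simp

lemma main_aux (k : ℕ) (hk : 2 ≤ k) (R G B : Fin 3)
    (hRG : R ≠ G) (hRB : R ≠ B) (hGB : G ≠ B)
    (c : ℕ → Fin 3)
    (hrf : ∀ b d : ℕ, 1 ≤ b → 1 ≤ d →
      ¬ (c (b + d ^ k) ≠ c b ∧ c (b + d ^ k) ≠ c d ∧ c b ≠ c d))
    (hdom : ∀ i : ℕ, 1 ≤ i → c i ≠ c (i + 1) → c i = R ∨ c (i + 1) = R)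
    (hdens : ∀ M : ℝ, ∃ n : ℕ,
      M + n / 4 < (((Finset.Icc 1 n).filter (fun m => c m = R)).card : ℝ) ∧
      M + n / 4 < (((Finset.Icc 1 n).filter (fun m => c m = B)).card : ℝ) ∧
      M + n / 4 < (((Finset.Icc 1 n).filter (fun m => c m = G)).card : ℝ))
    (hncE : ¬ ∃ a b : ℕ, 1 ≤ a ∧ 1 ≤ b ∧ a ≠ b ∧ c a = B ∧ c b = B ∧ Nat.Coprime a b) :
    False := by
  have hnc : ∀ a b : ℕ, 1 ≤ a → 1 ≤ b → a ≠ b → c a = B → c b = B → ¬ Nat.Coprime a b :=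
    fun a b h1 h2 h3 h4 h5 h6 => hncE ⟨a, b, h1, h2, h3, h4, h5, h6⟩
  have tri : ∀ v : Fin 3, v = R ∨ v = G ∨ v = B := fun v => aux_fin3 R G B v hRG hRB hGB
  have h1k : (1 : ℕ) ^ k = 1 := one_pow k
  -- B is unbounded
  have hBinf : ∀ m : ℕ, ∃ b, m < b ∧ c b = B := by
    intro m
    by_contra hcon
    push_neg at hcon
    obtain ⟨n, -, hB, -⟩ := hdens m
    have hsub : (Finset.Icc 1 n).filter (fun x => c x = B) ⊆ Finset.Icc 1 m := by
      intro x hx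
      simp only [Finset.mem_filter, Finset.mem_Icc] at hx ⊢
      refine ⟨hx.1.1, ?_⟩
      by_contra hxm
      exact (hcon x (by omega)) hx.2
    have hcard : (((Finset.Icc 1 n).filter (fun x => c x = B)).card : ℝ) ≤ m := by
      have h := Finset.card_le_card hsub
      have : ((Finset.Icc 1 m).card : ℕ) = m := by simp
      exact_mod_cast le_trans h (le_of_eq this)
    have hn4 : (0 : ℝ) ≤ (n : ℝ) / 4 := by positivity
    have hm : (0:ℝ) ≤ (m:ℝ) := Nat.cast_nonneg m
    linarith
  obtain ⟨b₀, hb₀m, hb₀B⟩ := hBinf 0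
  have hb₀1 : 1 ≤ b₀ := hb₀m
  -- color of 1 is R
  have hc1 : c 1 = R := by
    rcases tri (c 1) with h | h | h
    · exact h
    · -- c 1 = G
      exfalso
      have hr := hrf b₀ 1 hb₀1 le_rfl
      rw [h1k] at hr
      have hbB : c (b₀ + 1) = B := by
        rcases tri (c (b₀ + 1)) with hh | hh | hh
        · exfalso
          exact hr ⟨by rw [hh, hb₀B]; exact hRB,
                    by rw [hh, h]; exact hRG,
                    by rw [hb₀B, h]; exact Ne.symm hGB⟩
        · exfalso
          have hd := hdom b₀ hb₀1 (by rw [hb₀B, hh]; exact Ne.symm hGB)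
          rcases hd with hd | hd
          · rw [hb₀B] at hd; exact hRB hd.symm
          · rw [hh] at hd; exact hRG hd.symm
        · exact hh
      exact hnc b₀ (b₀ + 1) hb₀1 (by omega) (by omega) hb₀B hbB (cop_succ b₀)
    · -- c 1 = B
      exfalso
      obtain ⟨b₁, hb₁, hb₁B⟩ := hBinf 1
      exact hnc 1 b₁ le_rfl (by omega) (by omega) h hb₁B (Nat.coprime_one_left b₁)
  -- successor of a B is R
  have hBsucc : ∀ b, 1 ≤ b → c b = B → c (b + 1) = R := by
    intro b hb hB
    rcases tri (c (b + 1)) with h | h | h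
    · exact h
    · exfalso
      have hr := hrf b 1 hb le_rfl
      rw [h1k] at hr
      exact hr ⟨by rw [h, hB]; exact hGB,
                by rw [h, hc1]; exact Ne.symm hRG,
                by rw [hB, hc1]; exact Ne.symm hRB⟩
    · exact absurd (cop_succ b) (hnc b (b + 1) hb (by omega) (by omega) hB h)
  -- predecessor of a B is R
  have hBpred : ∀ a, 1 ≤ a → c (a + 1) = B → c a = R := by
    intro a ha hB
    rcases tri (c a) with h | h | h
    · exact h
    · exfalso
      have hr := hrf a 1 ha le_rfl
      rw [h1k] at hr
      exact hr ⟨by rw [hB, h]; exact Ne.symm hGB,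
                by rw [hB, hc1]; exact Ne.symm hRB,
                by rw [h, hc1]; exact Ne.symm hRG⟩
    · exact absurd (cop_succ a) (hnc a (a + 1) ha (by omega) (by omega) h hB)
  by_cases hGG : ∃ x, 1 ≤ x ∧ c x = G ∧ c (x + 1) = G
  · -- Case 2 : there is a G-G adjacency
    obtain ⟨g₀, hg₀1, hg₀G, hg₀G'⟩ := hGG
    by_cases hcp : ∃ p, Nat.Prime p ∧ ∀ b, 1 ≤ b → c b = B → p ∣ b
    · obtain ⟨p, pp, hall⟩ := hcp
      by_cases hp2 : p = 2
      · -- common prime 2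
        subst hp2
        have hg₁ : ∃ g₁, 1 ≤ g₁ ∧ c g₁ = G ∧ g₁ % 2 = 1 := by
          rcases Nat.even_or_odd g₀ with he | ho
          · have he2 := Nat.even_iff.mp he
            exact ⟨g₀ + 1, by omega, hg₀G', by omega⟩
          · exact ⟨g₀, hg₀1, hg₀G, Nat.odd_iff.mp ho⟩
        obtain ⟨g₁, hg₁1, hg₁G, hg₁odd⟩ := hg₁
        set h : ℕ := g₁ ^ k + 1 with hhdef
        have hoddpow : g₁ ^ k % 2 = 1 := by
          exact Nat.odd_iff.mp (Nat.odd_iff.mpr hg₁odd).pow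
        have hh2 : 2 ∣ h := by omega
        have hh1 : 1 ≤ h := by omega
        obtain ⟨n, hRc, hBc, hGc⟩ := hdens (h : ℝ)
        set Bs := (Finset.Icc 1 n).filter (fun x => c x = B) with hBsdef
        have hpair : ∃ b', 1 ≤ b' ∧ c b' = B ∧ c (b' + h) = B := by
          by_contra hno
          push_neg at hno
          set Ev := (Finset.Icc 1 (n + h)).filter (fun x => 2 ∣ x) with hEvdef
          have hsub1 : Bs ⊆ Ev := by
            intro x hx
            simp only [hBsdef, hEvdef, Finset.mem_filter, Finset.mem_Icc] at hx ⊢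
            exact ⟨⟨hx.1.1, by omega⟩, hall x hx.1.1 hx.2⟩
          have hsub2 : Finset.image (· + h) Bs ⊆ Ev := by
            intro y hy
            simp only [Finset.mem_image, hBsdef, hEvdef, Finset.mem_filter,
              Finset.mem_Icc] at hy ⊢
            obtain ⟨x, ⟨⟨hx1, hxn⟩, hxB⟩, rfl⟩ := hy
            have h2x := hall x hx1 hxB
            exact ⟨⟨by omega, by omega⟩, by omega⟩
          have hdisj : Disjoint Bs (Finset.image (· + h) Bs) := by
            rw [Finset.disjoint_left]
            intro z hz hz'
            simp only [Finset.mem_image, hBsdef, Finset.mem_filter, Finset.mem_Icc] at hz hz'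
            obtain ⟨x, ⟨⟨hx1, hxn⟩, hxB⟩, rfl⟩ := hz'
            exact hno x hx1 hxB hz.2
          have hcardim : (Finset.image (· + h) Bs).card = Bs.card :=
            Finset.card_image_of_injective _ (add_left_injective h)
          have hcards : Bs.card + Bs.card ≤ Ev.card := by
            have h1 := Finset.card_le_card (Finset.union_subset hsub1 hsub2)
            rw [Finset.card_union_of_disjoint hdisj, hcardim] at h1
            exact h1
          have hEv : Ev.card = (n + h) / 2 := card_evens (n + h)
          have hcast : ((((n : ℕ) + h) / 2 : ℕ) : ℝ) ≤ ((n : ℝ) + h) / 2 := by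
            have := Nat.cast_div_le (α := ℝ) (m := n + h) (n := 2)
            push_cast at this ⊢
            linarith
          have hfin : (Bs.card : ℝ) + Bs.card ≤ ((n : ℝ) + h) / 2 := by
            rw [hEv] at hcards
            calc (Bs.card : ℝ) + Bs.card = ((Bs.card + Bs.card : ℕ) : ℝ) := by push_cast; ring
            _ ≤ (((n + h) / 2 : ℕ) : ℝ) := by exact_mod_cast hcards
            _ ≤ ((n : ℝ) + h) / 2 := hcast
          have hhpos : (1:ℝ) ≤ (h:ℝ) := by exact_mod_cast hh1
          linarith
        obtain ⟨b', hb'1, hb'B, hb'hB⟩ := hpair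
        have ha : c (b' + g₁ ^ k) = R := by
          apply hBpred (b' + g₁ ^ k) (by omega)
          rw [show b' + g₁ ^ k + 1 = b' + h by omega]
          exact hb'hB
        exact hrf b' g₁ hb'1 hg₁1 ⟨by rw [ha, hb'B]; exact hRB,
          by rw [ha, hg₁G]; exact hRG,
          by rw [hb'B, hg₁G]; exact Ne.symm hGB⟩
      · -- common prime p ≥ 3
        have hp3 : 3 ≤ p := by have := pp.two_le; omega
        obtain ⟨n, hRc, hBc, hGc⟩ := hdens 1
        set Bs := (Finset.Icc 1 n).filter (fun x => c x = B) with hBsdef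
        have hB2 : ∀ x ∈ Bs, 2 ≤ x := by
          intro x hx
          simp only [hBsdef, Finset.mem_filter, Finset.mem_Icc] at hx
          rcases Nat.lt_or_ge x 2 with h | h
          · exfalso
            have hx1 : x = 1 := by omega
            rw [hx1] at hx
            rw [hc1] at hx
            exact hRB hx.2
          · exact h
        set T := (Finset.Icc 1 (n + 1)).filter (fun x => c x = R) with hTdef
        have hsub1 : Finset.image (· - 1) Bs ⊆ T := by
          intro y hy
          simp only [Finset.mem_image] at hy
          obtain ⟨x, hx, rfl⟩ := hy
          have h2 := hB2 x hx
          simp only [hBsdef, Finset.mem_filter, Finset.mem_Icc] at hx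
          simp only [hTdef, Finset.mem_filter, Finset.mem_Icc]
          refine ⟨⟨by omega, by omega⟩, ?_⟩
          apply hBpred (x - 1) (by omega)
          rw [show x - 1 + 1 = x by omega]
          exact hx.2
        have hsub2 : Finset.image (· + 1) Bs ⊆ T := by
          intro y hy
          simp only [Finset.mem_image] at hy
          obtain ⟨x, hx, rfl⟩ := hy
          simp only [hBsdef, Finset.mem_filter, Finset.mem_Icc] at hx
          simp only [hTdef, Finset.mem_filter, Finset.mem_Icc]
          exact ⟨⟨by omega, by omega⟩, hBsucc x hx.1.1 hx.2⟩
        have hdisj : Disjoint (Finset.image (· - 1) Bs) (Finset.image (· + 1) Bs) := by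
          rw [Finset.disjoint_left]
          intro z hz hz'
          simp only [Finset.mem_image] at hz hz'
          obtain ⟨x, hx, hxz⟩ := hz
          obtain ⟨y, hy, hyz⟩ := hz'
          have h2x := hB2 x hx
          have hxy : x = y + 2 := by omega
          simp only [hBsdef, Finset.mem_filter, Finset.mem_Icc] at hx hy
          have hdx := hall x hx.1.1 hx.2
          have hdy := hall y hy.1.1 hy.2
          have : p ∣ 2 := by
            have : p ∣ x - y := Nat.dvd_sub hdx hdy
            rwa [show x - y = 2 by omega] at this
          have := Nat.le_of_dvd (by norm_num) this
          omega
        have hinj1 : Set.InjOn (· - 1) Bs := by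
          intro x hx y hy hxy
          have h2x := hB2 x hx
          have h2y := hB2 y hy
          simp only at hxy
          omega
        have hcards : Bs.card + Bs.card ≤ T.card := by
          have h1 := Finset.card_le_card (Finset.union_subset hsub1 hsub2)
          rw [Finset.card_union_of_disjoint hdisj,
            Finset.card_image_of_injOn hinj1,
            Finset.card_image_of_injective _ (add_left_injective 1)] at h1
          exact h1
        -- T.card ≤ cntR + 1
        have hTcard : T.card ≤ ((Finset.Icc 1 n).filter (fun x => c x = R)).card + 1 := by
          have : T ⊆ insert (n+1) ((Finset.Icc 1 n).filter (fun x => c x = R)) := by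
            intro x hx
            simp only [hTdef, Finset.mem_filter, Finset.mem_Icc] at hx
            rcases Nat.lt_or_ge x (n+1) with h | h
            · exact Finset.mem_insert_of_mem (by
                simp only [Finset.mem_filter, Finset.mem_Icc]
                exact ⟨⟨hx.1.1, by omega⟩, hx.2⟩)
            · have : x = n + 1 := by omega
              exact this ▸ Finset.mem_insert_self _ _
          calc T.card ≤ _ := Finset.card_le_card this
          _ ≤ _ := Finset.card_insert_le _ _
        -- partition
        have hpart : ((Finset.Icc 1 n).filter (fun x => c x = R)).card
            + ((Finset.Icc 1 n).filter (fun x => c x = B)).card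
            + ((Finset.Icc 1 n).filter (fun x => c x = G)).card = n := by
          have h1 := Finset.card_filter_add_card_filter_not
            (s := Finset.Icc 1 n) (p := fun x => c x = R)
          have h2 : (Finset.Icc 1 n).filter (fun x => ¬ c x = R)
              = ((Finset.Icc 1 n).filter (fun x => c x = B))
                ∪ ((Finset.Icc 1 n).filter (fun x => c x = G)) := by
            rw [← Finset.filter_or]
            apply Finset.filter_congr
            intro x _
            constructor
            · intro hx
              rcases tri (c x) with h | h | h
              · exact absurd h hx
              · exact Or.inr h
              · exact Or.inl h
            · intro hx hR
              rcases hx with h | h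
              · rw [hR] at h; exact hRB h
              · rw [hR] at h; exact hRG h
          have h3 : Disjoint ((Finset.Icc 1 n).filter (fun x => c x = B))
              ((Finset.Icc 1 n).filter (fun x => c x = G)) := by
            rw [Finset.disjoint_left]
            intro z hz hz'
            simp only [Finset.mem_filter] at hz hz'
            rw [hz.2] at hz'
            exact hGB hz'.2.symm
          rw [h2, Finset.card_union_of_disjoint h3] at h1
          have h4 : (Finset.Icc 1 n).card = n := by simp
          omega
        -- assemble
        have e1 : ((((Finset.Icc 1 n).filter (fun x => c x = R)).card : ℕ) : ℝ)
            + (((Finset.Icc 1 n).filter (fun x => c x = B)).card : ℝ)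
            + (((Finset.Icc 1 n).filter (fun x => c x = G)).card : ℝ) = (n : ℝ) := by
          exact_mod_cast congrArg (fun z : ℕ => (z : ℝ)) hpart
        have e2 : (Bs.card : ℝ) + Bs.card
            ≤ (((Finset.Icc 1 n).filter (fun x => c x = R)).card : ℝ) + 1 := by
          exact_mod_cast le_trans hcards hTcard
        have hBseq : ((Finset.Icc 1 n).filter (fun x => c x = B)).card = Bs.card := rfl
        rw [hBseq] at e1
        linarith
    · -- no common prime : reachability machinery
      push_neg at hcp
      set P : ℕ → Prop := fun x => 1 ≤ x ∧ c x = G ∧ c (x + 1) = G with hPdef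
      have hPg₀ : P g₀ := ⟨hg₀1, hg₀G, hg₀G'⟩
      have hnotR : ∀ x b, 1 ≤ x → 1 ≤ b → c b = B → c x = G → c (x + b ^ k) ≠ R := by
        intro x b hx hb hbB hxG hR
        exact hrf x b hx hb ⟨by rw [hR, hxG]; exact hRG,
          by rw [hR, hbB]; exact hRB, by rw [hxG, hbB]; exact hGB⟩
      have hnotR' : ∀ x b, 1 ≤ x → 1 ≤ b → c b = B → c (x + b ^ k) = G → c x ≠ R := by
        intro x b hx hb hbB haG hR
        exact hrf x b hx hb ⟨by rw [haG, hR]; exact Ne.symm hRG,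
          by rw [haG, hbB]; exact hGB, by rw [hR, hbB]; exact hRB⟩
      have hup : ∀ b, 1 ≤ b → c b = B → ∀ x, P x → P (x + b ^ k) := by
        intro b hb hbB x hPx
        obtain ⟨hx1, hxG, hxG'⟩ := hPx
        have ha : c (x + b ^ k) = G := by
          rcases tri (c (x + b ^ k)) with hcase | hcase | hcase
          · exact absurd hcase (hnotR x b hx1 hb hbB hxG)
          · exact hcase
          · exfalso
            have h1 := hBsucc (x + b ^ k) (by omega) hcase
            have h2 := hnotR (x + 1) b (by omega) hb hbB hxG'
            apply h2
            rw [show x + 1 + b ^ k = x + b ^ k + 1 by ring]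
            exact h1
        have ha' : c (x + b ^ k + 1) = G := by
          have h2 : c (x + 1 + b ^ k) ≠ R := hnotR (x + 1) b (by omega) hb hbB hxG'
          rcases tri (c (x + b ^ k + 1)) with hcase | hcase | hcase
          · exfalso
            apply h2
            rw [show x + 1 + b ^ k = x + b ^ k + 1 by ring]
            exact hcase
          · exact hcase
          · exfalso
            have h3 := hBpred (x + b ^ k) (by omega) hcase
            exact hRG (h3.symm.trans ha)
        exact ⟨by omega, ha, ha'⟩
      have hdown : ∀ b, 1 ≤ b → c b = B → ∀ x, 1 ≤ x → P (x + b ^ k) → P x := by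
        intro b hb hbB x hx1 hPx
        obtain ⟨-, haG, haG'⟩ := hPx
        have h2g : c (x + 1 + b ^ k) = G := by
          rw [show x + 1 + b ^ k = x + b ^ k + 1 by ring]
          exact haG'
        have hxG : c x = G := by
          rcases tri (c x) with hcase | hcase | hcase
          · exact absurd hcase (hnotR' x b hx1 hb hbB haG)
          · exact hcase
          · exfalso
            have h1 := hBsucc x hx1 hcase
            exact (hnotR' (x + 1) b (by omega) hb hbB h2g) h1
        have hxG' : c (x + 1) = G := by
          rcases tri (c (x + 1)) with hcase | hcase | hcase
          · exact absurd hcase (hnotR' (x + 1) b (by omega) hb hbB h2g)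
          · exact hcase
          · exfalso
            have h3 := hBpred x hx1 hcase
            exact hRG (h3.symm.trans hxG)
        exact ⟨hx1, hxG, hxG'⟩
      have hupj : ∀ b, 1 ≤ b → c b = B → ∀ j x, P x → P (x + j * b ^ k) := by
        intro b hb hbB j
        induction j with
        | zero => intro x hx; simpa using hx
        | succ j ih =>
          intro x hx
          have h1 := hup b hb hbB _ (ih x hx)
          rw [show x + j * b ^ k + b ^ k = x + (j + 1) * b ^ k by ring] at h1
          exact h1
      have hdownj : ∀ b, 1 ≤ b → c b = B → ∀ j x, 1 ≤ x → P (x + j * b ^ k) → P x := by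
        intro b hb hbB j
        induction j with
        | zero => intro x _ hx; simpa using hx
        | succ j ih =>
          intro x hx h1
          apply ih x hx
          apply hdown b hb hbB (x + j * b ^ k) (by omega)
          rw [show x + j * b ^ k + b ^ k = x + (j + 1) * b ^ k by ring]
          exact h1
      set Good : ℕ → Prop := fun d => ∀ x : ℕ, 1 ≤ x → (d : ℤ) ∣ ((x : ℤ) - g₀) → P x
        with hGooddef
      have hbase : ∀ b, 1 ≤ b → c b = B → Good (b ^ k) := by
        intro b hb hbB x hx hdvd
        have hbk1 : 1 ≤ b ^ k := Nat.one_le_pow _ _ (by omega)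
        rcases le_total g₀ x with hle | hle
        · have hdvd' : (b ^ k : ℕ) ∣ (x - g₀) := by
            have hcast : ((x : ℤ) - g₀) = ((x - g₀ : ℕ) : ℤ) := by omega
            rw [hcast] at hdvd
            exact_mod_cast hdvd
          obtain ⟨j, hj⟩ := hdvd'
          rw [mul_comm] at hj
          have hx' : x = g₀ + j * b ^ k := by omega
          rw [hx']
          exact hupj b hb hbB j g₀ hPg₀
        · have hdvd' : (b ^ k : ℕ) ∣ (g₀ - x) := by
            have hneg : ((b ^ k : ℕ) : ℤ) ∣ ((g₀ : ℤ) - x) := by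
              rw [show (g₀ : ℤ) - x = -((x : ℤ) - g₀) by ring]
              exact dvd_neg.mpr hdvd
            have hcast : ((g₀ : ℤ) - x) = ((g₀ - x : ℕ) : ℤ) := by omega
            rw [hcast] at hneg
            exact_mod_cast hneg
          obtain ⟨j, hj⟩ := hdvd'
          rw [mul_comm] at hj
          have hg' : g₀ = x + j * b ^ k := by omega
          exact hdownj b hb hbB j x hx (by rw [← hg']; exact hPg₀)
      have hstep : ∀ d b, 1 ≤ d → 1 ≤ b → c b = B → Good d → Good (Nat.gcd d (b ^ k)) := by
        intro d b hd hb hbB hGd x hx hdvd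
        have hbez := Nat.gcd_eq_gcd_ab d (b ^ k)
        obtain ⟨m, hm⟩ := hdvd
        rw [hbez] at hm
        set t : ℕ := b ^ k with htdef
        set Az : ℤ := Nat.gcdA d t with hAz
        set Bz : ℤ := Nat.gcdB d t with hBz
        set z : ℤ := (-(Bz * m)) % (d : ℤ) with hz
        have hdpos : (0 : ℤ) < (d : ℤ) := by exact_mod_cast hd
        have hz0 : 0 ≤ z := Int.emod_nonneg _ (by omega)
        set N : ℕ := z.toNat with hN
        have hzN : (N : ℤ) = z := Int.toNat_of_nonneg hz0
        set q : ℤ := (-(Bz * m)) / (d : ℤ) with hq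
        have hzq : z + (d : ℤ) * q = -(Bz * m) := by
          rw [hz, hq]
          exact Int.emod_add_mul_ediv _ _
        have hdvd2 : (d : ℤ) ∣ (((x + N * t : ℕ) : ℤ) - g₀) := by
          refine ⟨Az * m - (t : ℤ) * q, ?_⟩
          push_cast
          linear_combination hm + (t : ℤ) * hzN + (t : ℤ) * hzq
        have hPy : P (x + N * t) := hGd (x + N * t) (by omega) hdvd2
        exact hdownj b hb hbB N x hx hPy
      have hfin : ∀ d, 1 ≤ d → Good d → False := by
        intro d
        induction d using Nat.strong_induction_on with
        | _ d ih =>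
          intro hd hGd
          rcases eq_or_lt_of_le hd with h1 | h2
          · have hP1 : P 1 := hGd 1 le_rfl (by rw [← h1]; exact one_dvd _)
            exact hRG (hc1.symm.trans hP1.2.1)
          · obtain ⟨p, pp, hpd⟩ := Nat.exists_prime_and_dvd (by omega : d ≠ 1)
            obtain ⟨b, hb1, hbB, hpb⟩ := hcp p pp
            have hbk1 : 1 ≤ b ^ k := Nat.one_le_pow _ _ (by omega)
            have hlt : Nat.gcd d (b ^ k) < d := by
              have hdvdd := Nat.gcd_dvd_left d (b ^ k)
              rcases lt_or_eq_of_le (Nat.le_of_dvd (by omega) hdvdd) with hlt' | heq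
              · exact hlt'
              · exfalso
                apply hpb
                apply pp.dvd_of_dvd_pow (n := k)
                exact hpd.trans (heq ▸ Nat.gcd_dvd_right d (b ^ k))
            have hpos : 1 ≤ Nat.gcd d (b ^ k) := Nat.gcd_pos_of_pos_left _ (by omega)
            exact ih _ hlt hpos (hstep d b hd hb1 hbB hGd)
      exact hfin (b₀ ^ k) (Nat.one_le_pow _ _ (by omega)) (hbase b₀ hb₀1 hb₀B)
  · -- Case 1 : no G-G adjacency
    obtain ⟨n, hRc, hBc, hGc⟩ := hdens 1
    set A := (Finset.Icc 1 n).filter (fun x => c x = B ∨ c x = G) with hAdef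
    have hcard : A.card = ((Finset.Icc 1 n).filter (fun x => c x = B)).card
        + ((Finset.Icc 1 n).filter (fun x => c x = G)).card := by
      rw [hAdef, Finset.filter_or]
      apply Finset.card_union_of_disjoint
      rw [Finset.disjoint_left]
      intro z hz hz'
      simp only [Finset.mem_filter] at hz hz'
      rw [hz.2] at hz'
      exact hGB hz'.2.symm
    have hnc2 : ∀ x ∈ A, x + 1 ∉ A := by
      intro x hx hx1
      simp only [hAdef, Finset.mem_filter, Finset.mem_Icc] at hx hx1
      obtain ⟨⟨hxa, hxb⟩, hcx⟩ := hx
      obtain ⟨-, hcx1⟩ := hx1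
      rcases hcx with hxB | hxG
      · have hs := hBsucc x hxa hxB
        rcases hcx1 with hh | hh
        · rw [hs] at hh; exact hRB hh
        · rw [hs] at hh; exact hRG hh
      · rcases hcx1 with hh | hh
        · have hp := hBpred x hxa hh
          rw [hp] at hxG; exact hRG hxG
        · exact hGG ⟨x, hxa, hxG, hh⟩
    have hbound := card_no_consec A (Finset.filter_subset _ _) hnc2
    have hcast : (((n + 1) / 2 : ℕ) : ℝ) ≤ ((n : ℝ) + 1) / 2 := by
      have := Nat.cast_div_le (α := ℝ) (m := n + 1) (n := 2)
      push_cast at this ⊢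
      linarith
    have hAcard : (A.card : ℝ) ≤ ((n : ℝ) + 1) / 2 := by
      calc (A.card : ℝ) ≤ (((n + 1) / 2 : ℕ) : ℝ) := by exact_mod_cast hbound
      _ ≤ ((n : ℝ) + 1) / 2 := hcast
    have hAc : (A.card : ℝ) = (((Finset.Icc 1 n).filter (fun x => c x = B)).card : ℝ)
        + (((Finset.Icc 1 n).filter (fun x => c x = G)).card : ℝ) := by
      exact_mod_cast congrArg (fun z : ℕ => (z : ℝ)) hcard
    linarith


/-- Let `s = ⌊k/2⌋`. In a rainbow-free exact 3-coloring of the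
positive integers with dominant color `R` satisfying
`limsup (min{ℛ(n), ℬ(n), 𝒢(n)} - n·(4^s - 1)/(3·4^s)) = ∞`, both nondominant
color classes `ℬ` and `𝒢` contain a pair of relatively prime integers. -/
theorem stmt_5 (k : ℕ) (hk : 2 ≤ k) (R G B : Fin 3)
    (hRG : R ≠ G) (hRB : R ≠ B) (hGB : G ≠ B)
    (c : ℕ → Fin 3)
    (hexact : ∀ col : Fin 3, ∃ i, 1 ≤ i ∧ c i = col)
    (hrf : ∀ b d : ℕ, 1 ≤ b → 1 ≤ d →
      ¬ (c (b + d ^ k) ≠ c b ∧ c (b + d ^ k) ≠ c d ∧ c b ≠ c d))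
    (hdom : ∀ i : ℕ, 1 ≤ i → c i ≠ c (i + 1) → c i = R ∨ c (i + 1) = R)
    (hdens : ∀ M : ℝ, ∃ᶠ n in atTop,
      ((min (min (((Finset.Icc 1 n).filter (fun m => c m = R)).card)
                 (((Finset.Icc 1 n).filter (fun m => c m = B)).card))
            (((Finset.Icc 1 n).filter (fun m => c m = G)).card) : ℕ) : ℝ)
        - (n : ℝ) * ((4 ^ (k / 2) - 1 : ℝ) / (3 * 4 ^ (k / 2) : ℝ)) > M) :
    (∃ a b : ℕ, 1 ≤ a ∧ 1 ≤ b ∧ a ≠ b ∧ c a = B ∧ c b = B ∧ Nat.Coprime a b) ∧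
    (∃ a b : ℕ, 1 ≤ a ∧ 1 ≤ b ∧ a ≠ b ∧ c a = G ∧ c b = G ∧ Nat.Coprime a b) := by
  have hquarter : ∀ n : ℕ,
      (n : ℝ) / 4 ≤ (n : ℝ) * ((4 ^ (k / 2) - 1 : ℝ) / (3 * 4 ^ (k / 2) : ℝ)) := by
    intro n
    have hs : 1 ≤ k / 2 := by omega
    have h4 : (4 : ℝ) ≤ 4 ^ (k / 2) := by
      calc (4 : ℝ) = 4 ^ 1 := (pow_one 4).symm
      _ ≤ 4 ^ (k / 2) := by
        apply pow_le_pow_right₀ (by norm_num) hs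
    have hpos : (0 : ℝ) < 3 * 4 ^ (k / 2) := by positivity
    have hfrac : (1 : ℝ) / 4 ≤ (4 ^ (k / 2) - 1) / (3 * 4 ^ (k / 2)) := by
      rw [div_le_div_iff₀ (by norm_num) hpos]
      linarith
    calc (n : ℝ) / 4 = (n : ℝ) * (1 / 4) := by ring
    _ ≤ _ := mul_le_mul_of_nonneg_left hfrac (Nat.cast_nonneg n)
  have hdens' : ∀ M : ℝ, ∃ n : ℕ,
      M + n / 4 < (((Finset.Icc 1 n).filter (fun m => c m = R)).card : ℝ) ∧
      M + n / 4 < (((Finset.Icc 1 n).filter (fun m => c m = B)).card : ℝ) ∧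
      M + n / 4 < (((Finset.Icc 1 n).filter (fun m => c m = G)).card : ℝ) := by
    intro M
    obtain ⟨n, hn⟩ := (hdens M).exists
    have hq := hquarter n
    set cR := ((Finset.Icc 1 n).filter (fun m => c m = R)).card with hcR
    set cB := ((Finset.Icc 1 n).filter (fun m => c m = B)).card with hcB
    set cG := ((Finset.Icc 1 n).filter (fun m => c m = G)).card with hcG
    have hR : min (min cR cB) cG ≤ cR := le_trans (min_le_left _ _) (min_le_left _ _)
    have hB : min (min cR cB) cG ≤ cB := le_trans (min_le_left _ _) (min_le_right _ _)
    have hG : min (min cR cB) cG ≤ cG := min_le_right _ _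
    have hR' := (Nat.cast_le (α := ℝ)).mpr hR
    have hB' := (Nat.cast_le (α := ℝ)).mpr hB
    have hG' := (Nat.cast_le (α := ℝ)).mpr hG
    exact ⟨n, by linarith, by linarith, by linarith⟩
  constructor
  · by_contra hno
    exact main_aux k hk R G B hRG hRB hGB c hrf hdom hdens' hno
  · by_contra hno
    have hdens'' : ∀ M : ℝ, ∃ n : ℕ,
        M + n / 4 < (((Finset.Icc 1 n).filter (fun m => c m = R)).card : ℝ) ∧
        M + n / 4 < (((Finset.Icc 1 n).filter (fun m => c m = G)).card : ℝ) ∧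
        M + n / 4 < (((Finset.Icc 1 n).filter (fun m => c m = B)).card : ℝ) := by
      intro M
      obtain ⟨n, h1, h2, h3⟩ := hdens' M
      exact ⟨n, h1, h3, h2⟩
    exact main_aux k hk R B G hRB hRG (Ne.symm hGB) c hrf hdom hdens'' hno
end

section
/- Let k ≥ 2, let p be an odd prime, and let c : ℤ_p → {R, G, B} be an exact 3-coloring of ℤ_p that is rainbow-free for x − y = z^k. Then c(a) = c(−a) for every a ∈ ℤ_p. -/
/-- Let `p` be an odd prime and `c : ℤ_p → {R,G,B}` an exact
3-coloring that is rainbow-free for `x - y = z^k`. Then `c a = c (-a)` for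
every `a ∈ ℤ_p`. -/
theorem stmt_11 (k p : ℕ) (hk : 2 ≤ k) (hp : p.Prime) (hodd : Odd p)
    (c : ZMod p → Fin 3) (hsurj : Function.Surjective c)
    (hrf : ∀ b d : ZMod p,
      ¬ (c (b + d ^ k) ≠ c b ∧ c (b + d ^ k) ≠ c d ∧ c b ≠ c d)) :
    ∀ a : ZMod p, c a = c (-a) := by
  haveI : Fact p.Prime := ⟨hp⟩
  haveI : NeZero p := ⟨hp.pos.ne'⟩
  intro a
  by_contra hne
  have ha : a ≠ 0 := by rintro rfl; simp at hne
  have hs : a ^ k ≠ 0 := pow_ne_zero _ ha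
  obtain ⟨m3, hm1, hm2⟩ : ∃ m : Fin 3, m ≠ c a ∧ m ≠ c (-a) := by
    revert hne
    generalize c a = x
    generalize c (-a) = y
    revert x y
    decide
  obtain ⟨w, hw⟩ := hsurj m3
  -- key step: the third color class is closed under adding `a ^ k`
  have key : ∀ x, c x = m3 → c (x + a ^ k) = m3 := by
    intro x hx
    have h1 := hrf x a
    rw [hx] at h1
    by_contra h
    have e1 : c (x + a ^ k) = c a := by tauto
    have e2 : c (x + a ^ k) = c (-a) := by
      have h' : ¬ (m3 = c (x + a ^ k)) := fun e => h e.symm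
      rcases Nat.even_or_odd k with hke | hko
      · have h2 := hrf x (-a)
        rw [hke.neg_pow, hx] at h2
        tauto
      · have h2 := hrf (x + a ^ k) (-a)
        rw [hko.neg_pow] at h2
        have hxx : x + a ^ k + -(a ^ k) = x := by ring
        rw [hxx, hx] at h2
        tauto
    exact hne (e1.symm.trans e2)
  have steps : ∀ n : ℕ, c (w + n • (a ^ k)) = m3 := by
    intro n
    induction n with
    | zero => simpa using hw
    | succ n ih =>
      have hrw : w + (n + 1) • (a ^ k) = (w + n • (a ^ k)) + a ^ k := by
        rw [succ_nsmul]; ring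
      rw [hrw]
      exact key _ ih
  -- every element is reachable from `w` by adding multiples of `a ^ k`
  have : c a = m3 := by
    set t : ZMod p := (a - w) * (a ^ k)⁻¹ with ht
    have hcast : ((t.val : ℕ) : ZMod p) = t := ZMod.natCast_rightInverse t
    have h := steps t.val
    rw [nsmul_eq_mul, hcast] at h
    have htk : t * a ^ k = a - w := by
      rw [ht, mul_assoc, inv_mul_cancel₀ hs, mul_one]
    rw [htk] at h
    simpa using h
  exact hm1 this.symm
end

section
/- Let k ≥ 2, let p be an odd prime, and let c : ℤ_p → {R, G, B} be an exact 3-coloring of ℤ_p that is rainbow-free for x − y = z^k. Then the color class of 0 is exactly {0}; that is, c(a) ≠ c(0) for every nonzero a ∈ ℤ_p. -/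
open Finset

private lemma zmod_orbit {p : ℕ} [Fact p.Prime] (w : ZMod p) (hw : w ≠ 0) (x y : ZMod p) :
    ∃ n : ℕ, y = x + (n : ZMod p) * w := by
  refine ⟨((y - x) * w⁻¹).val, ?_⟩
  have h1 : ((((y - x) * w⁻¹).val : ℕ) : ZMod p) = (y - x) * w⁻¹ := by
    simp [ZMod.natCast_val, ZMod.cast_id]
  rw [h1, mul_assoc, inv_mul_cancel₀ hw, mul_one]
  ring

private lemma core_reduction {p : ℕ} [Fact p.Prime]
    (V U W : Finset (ZMod p)) (b σU σW : ZMod p)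
    (hb : b ≠ 0) (hσU : σU ≠ 0) (hσW : σW ≠ 0)
    (hVne : V.Nonempty) (hUne : U.Nonempty)
    (hUV : ∀ x ∈ U, x ∉ V) (hWV : ∀ x ∈ W, x ∉ V) (hUW : ∀ x ∈ U, x ∉ W)
    (hdich : ∀ x : ZMod p, x ∉ V → x ∉ U → x ∈ W)
    (hmonoU : ∀ x ∈ U, x + b ∉ V → x + b ∈ U)
    (hmonoW : ∀ x ∈ W, x + b ∉ V → x + b ∈ W)
    (hUp : ∀ x ∈ U, x + σU ∉ V) (hUm : ∀ x ∈ U, x - σU ∉ V)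
    (hWp : ∀ x ∈ W, x + σW ∉ V) (hWm : ∀ x ∈ W, x - σW ∉ V) :
    ∃ U₂ V₂ : Finset (ZMod p), U₂.Nonempty ∧ V₂.Nonempty ∧ (∀ x ∈ U₂, x ∉ V₂) ∧
      (∀ x ∈ U₂, x + σU ∈ U₂ ∪ V₂) ∧ (∀ x ∈ U₂, x - σU ∈ U₂ ∪ V₂) ∧
      (∀ x ∈ V₂, x + σW ∈ U₂ ∪ V₂) ∧ (∀ x ∈ V₂, x - σW ∈ U₂ ∪ V₂) ∧
      (∀ x ∈ U₂ ∪ V₂, ∀ y ∈ U₂ ∪ V₂, x - y ≠ b) ∧ (U₂ ∪ V₂).card ≤ V.card := by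
  classical
  have hp : p.Prime := Fact.out
  -- forward hitting time
  have hexF : ∀ x : ZMod p, ∃ n : ℕ, x + (((n+1 : ℕ)) : ZMod p) * b ∈ V := by
    intro x
    obtain ⟨v, hv⟩ := hVne
    obtain ⟨n₀, hn₀⟩ := zmod_orbit b hb x v
    refine ⟨n₀ + p - 1, ?_⟩
    have h2 : n₀ + p - 1 + 1 = n₀ + p := by have := hp.pos; omega
    rw [h2]
    have h3 : (((n₀ + p : ℕ)) : ZMod p) = (n₀ : ZMod p) := by
      push_cast [ZMod.natCast_self]; ring
    rw [h3, ← hn₀]; exact hv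
  -- backward hitting time
  have hexB : ∀ x : ZMod p, ∃ n : ℕ, x - (((n+1 : ℕ)) : ZMod p) * b ∈ V := by
    intro x
    obtain ⟨v, hv⟩ := hVne
    obtain ⟨n₀, hn₀⟩ := zmod_orbit (-b) (neg_ne_zero.mpr hb) x v
    refine ⟨n₀ + p - 1, ?_⟩
    have h2 : n₀ + p - 1 + 1 = n₀ + p := by have := hp.pos; omega
    rw [h2]
    have h3 : (((n₀ + p : ℕ)) : ZMod p) = (n₀ : ZMod p) := by
      push_cast [ZMod.natCast_self]; ring
    rw [h3]
    have : x - (n₀ : ZMod p) * b = v := by rw [hn₀]; ring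
    rw [this]; exact hv
  set d : ZMod p → ℕ := fun x => Nat.find (hexF x) with hd_def
  set eB : ZMod p → ℕ := fun x => Nat.find (hexB x) with heB_def
  have hd_spec : ∀ x : ZMod p, x + ((d x + 1 : ℕ) : ZMod p) * b ∈ V := fun x => Nat.find_spec (hexF x)
  have hd_min : ∀ x : ZMod p, ∀ m, m < d x → x + ((m + 1 : ℕ) : ZMod p) * b ∉ V :=
    fun x m hm => Nat.find_min (hexF x) hm
  have heB_spec : ∀ x : ZMod p, x - ((eB x + 1 : ℕ) : ZMod p) * b ∈ V := fun x => Nat.find_spec (hexB x)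
  have heB_min : ∀ x : ZMod p, ∀ m, m < eB x → x - ((m + 1 : ℕ) : ZMod p) * b ∉ V :=
    fun x m hm => Nat.find_min (hexB x) hm
  -- elements of the run, forward
  have runElt : ∀ x : ZMod p, x ∉ V → ∀ j, j ≤ d x → x + (j : ZMod p) * b ∉ V := by
    intro x hx j hj
    cases j with
    | zero => simpa using hx
    | succ m => exact hd_min x m (by omega)
  -- elements backward
  have backElt : ∀ x : ZMod p, x ∉ V → ∀ j, j ≤ eB x → x - (j : ZMod p) * b ∉ V := by
    intro x hx j hj
    cases j with
    | zero => simpa using hx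
    | succ m => exact heB_min x m (by omega)
  -- starts
  set isSt : ZMod p → Prop := fun x => x ∉ V ∧ x - b ∈ V with hisSt_def
  set SF : Finset (ZMod p) := univ.filter (fun x => x ∉ V ∧ x - b ∈ V) with hSF_def
  have memSF : ∀ x : ZMod p, x ∈ SF ↔ (x ∉ V ∧ x - b ∈ V) := by
    intro x; simp [hSF_def]
  -- make a start from any non-V element
  have mkStart : ∀ x : ZMod p, x ∉ V → (x - ((eB x : ℕ) : ZMod p) * b) ∈ SF := by
    intro x hx
    rw [memSF]
    constructor
    · exact backElt x hx (eB x) le_rfl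
    · have h4 : x - ((eB x : ℕ) : ZMod p) * b - b = x - ((eB x + 1 : ℕ) : ZMod p) * b := by
        push_cast; ring
      rw [h4]; exact heB_spec x
  have hSFne : SF.Nonempty := by
    obtain ⟨x, hx⟩ := hUne
    exact ⟨_, mkStart x (hUV x hx)⟩
  -- maximal run length
  set dmax : ℕ := (SF.image d).max' (hSFne.image d) with hdmax_def
  have hle : ∀ x ∈ SF, d x ≤ dmax := by
    intro x hx
    exact Finset.le_max' _ _ (Finset.mem_image_of_mem d hx)
  have hattain : ∃ x ∈ SF, d x = dmax := by
    have := Finset.max'_mem (SF.image d) (hSFne.image d)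
    rw [Finset.mem_image] at this
    obtain ⟨x, hx, hdx⟩ := this
    exact ⟨x, hx, hdx⟩
  -- run type constancy
  have runTypeU : ∀ x ∈ U, ∀ j, j ≤ d x → x + (j : ZMod p) * b ∈ U := by
    intro x hx j
    induction j with
    | zero => intro _; simpa using hx
    | succ m ih =>
      intro hm
      have h5 : x + ((m + 1 : ℕ) : ZMod p) * b = (x + (m : ZMod p) * b) + b := by push_cast; ring
      rw [h5]
      have hmem := ih (by omega)
      exact hmonoU _ hmem (by rw [← h5]; exact runElt x (hUV x hx) (m+1) hm)
  have runTypeW : ∀ x ∈ W, ∀ j, j ≤ d x → x + (j : ZMod p) * b ∈ W := by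
    intro x hx j
    induction j with
    | zero => intro _; simpa using hx
    | succ m ih =>
      intro hm
      have h5 : x + ((m + 1 : ℕ) : ZMod p) * b = (x + (m : ZMod p) * b) + b := by push_cast; ring
      rw [h5]
      have hmem := ih (by omega)
      exact hmonoW _ hmem (by rw [← h5]; exact runElt x (hWV x hx) (m+1) hm)
  -- THE TRANSLATION LEMMA
  have trans : ∀ x σ, x ∈ SF → d x = dmax →
      (∀ j, j ≤ d x → x + (j : ZMod p) * b + σ ∉ V) →
      (x + σ ∈ SF ∧ d (x + σ) = dmax) := by
    intro x σ hxSF hdx hσh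
    set y := x + σ with hy_def
    have hy0 : y ∉ V := by
      have := hσh 0 (Nat.zero_le _)
      simpa using this
    set m := eB y with hm_def
    set w := y - ((m : ℕ) : ZMod p) * b with hw_def
    have hwSF : w ∈ SF := mkStart y hy0
    have hwnV : w ∉ V := ((memSF w).mp hwSF).1
    -- all of the first m + d x forward steps from w avoid V
    have hclaim : ∀ i, i ≤ m + d x → w + (i : ZMod p) * b ∉ V := by
      intro i hi
      by_cases hcase : i ≤ m
      · have h6 : w + (i : ZMod p) * b = y - (((m - i : ℕ)) : ZMod p) * b := by
          rw [hw_def]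
          have : ((m - i : ℕ) : ZMod p) = (m : ZMod p) - (i : ZMod p) := by
            push_cast [Nat.cast_sub hcase]; ring
          rw [this]; ring
        rw [h6]
        exact backElt y hy0 (m - i) (by omega)
      · push_neg at hcase
        have h7 : w + (i : ZMod p) * b = x + (((i - m : ℕ)) : ZMod p) * b + σ := by
          rw [hw_def, hy_def]
          have : ((i - m : ℕ) : ZMod p) = (i : ZMod p) - (m : ZMod p) := by
            push_cast [Nat.cast_sub (le_of_lt hcase)]; ring
          rw [this]; ring
        rw [h7]
        exact hσh (i - m) (by omega)
    have hdw : m + d x ≤ d w := by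
      by_contra hlt
      push_neg at hlt
      exact hclaim (d w + 1) (by omega) (hd_spec w)
    have hdw2 : d w ≤ dmax := hle w hwSF
    have hm0 : m = 0 := by omega
    have hwy : w = y := by rw [hw_def, hm0]; simp
    constructor
    · rw [← hwy]; exact hwSF
    · rw [← hwy]; omega
  -- both types exist among maximal starts
  have hexU : ∃ x ∈ SF, d x = dmax ∧ x ∈ U := by
    by_contra hno
    push_neg at hno
    -- all maximal starts are in W; translate by σW forever
    obtain ⟨x₀, hx₀SF, hx₀d⟩ := hattain
    have hx₀W : x₀ ∈ W := by
      by_cases hU : x₀ ∈ U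
      · exact absurd hU (hno x₀ hx₀SF hx₀d)
      · exact hdich x₀ ((memSF x₀).mp hx₀SF).1 hU
    have hstep : ∀ n : ℕ, (x₀ + (n : ZMod p) * σW) ∈ SF ∧ d (x₀ + (n : ZMod p) * σW) = dmax ∧
        (x₀ + (n : ZMod p) * σW) ∈ W := by
      intro n
      induction n with
      | zero => simpa using ⟨hx₀SF, hx₀d, hx₀W⟩
      | succ nn ih =>
        obtain ⟨hSFn, hdn, hWn⟩ := ih
        have htr := trans _ σW hSFn hdn (by
          intro j hj
          exact hWp _ (runTypeW _ hWn j hj))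
        have heq : x₀ + ((nn + 1 : ℕ) : ZMod p) * σW = (x₀ + (nn : ZMod p) * σW) + σW := by
          push_cast; ring
        rw [heq]
        refine ⟨htr.1, htr.2, ?_⟩
        by_cases hU : ((x₀ + (nn : ZMod p) * σW) + σW) ∈ U
        · exact absurd hU (hno _ htr.1 htr.2)
        · exact hdich _ ((memSF _).mp htr.1).1 hU
    obtain ⟨v, hv⟩ := hVne
    obtain ⟨n, hn⟩ := zmod_orbit σW hσW x₀ v
    have := (hstep n).2.2
    rw [← hn] at this
    exact hWV v this hv
  have hexW : ∃ x ∈ SF, d x = dmax ∧ x ∈ W := by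
    by_contra hno
    push_neg at hno
    obtain ⟨x₀, hx₀SF, hx₀d, hx₀U⟩ := hexU
    have hstep : ∀ n : ℕ, (x₀ + (n : ZMod p) * σU) ∈ SF ∧ d (x₀ + (n : ZMod p) * σU) = dmax ∧
        (x₀ + (n : ZMod p) * σU) ∈ U := by
      intro n
      induction n with
      | zero => simpa using ⟨hx₀SF, hx₀d, hx₀U⟩
      | succ nn ih =>
        obtain ⟨hSFn, hdn, hUn⟩ := ih
        have htr := trans _ σU hSFn hdn (by
          intro j hj
          exact hUp _ (runTypeU _ hUn j hj))
        have heq : x₀ + ((nn + 1 : ℕ) : ZMod p) * σU = (x₀ + (nn : ZMod p) * σU) + σU := by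
          push_cast; ring
        rw [heq]
        refine ⟨htr.1, htr.2, ?_⟩
        by_cases hW : ((x₀ + (nn : ZMod p) * σU) + σU) ∈ W
        · exact absurd hW (hno _ htr.1 htr.2)
        · by_cases hU : ((x₀ + (nn : ZMod p) * σU) + σU) ∈ U
          · exact hU
          · exact absurd (hdich _ ((memSF _).mp htr.1).1 hU) hW
    obtain ⟨v, hv⟩ := hVne
    obtain ⟨n, hn⟩ := zmod_orbit σU hσU x₀ v
    have := (hstep n).2.2
    rw [← hn] at this
    exact hUV v this hv
  -- the output sets
  set S₂ : Finset (ZMod p) := SF.filter (fun x => d x = dmax) with hS₂_def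
  set U₂ : Finset (ZMod p) := S₂.filter (fun x => x ∈ U) with hU₂_def
  set V₂ : Finset (ZMod p) := S₂.filter (fun x => x ∉ U) with hV₂_def
  have hunion : U₂ ∪ V₂ = S₂ := Finset.filter_union_filter_not_eq _ _
  have memS₂ : ∀ x : ZMod p, x ∈ S₂ ↔ (x ∈ SF ∧ d x = dmax) := by
    intro x; simp [hS₂_def]
  refine ⟨U₂, V₂, ?_, ?_, ?_, ?_, ?_, ?_, ?_, ?_, ?_⟩
  · obtain ⟨x, hxSF, hxd, hxU⟩ := hexU
    exact ⟨x, by simp [hU₂_def, memS₂, hxSF, hxd, hxU]⟩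
  · obtain ⟨x, hxSF, hxd, hxW⟩ := hexW
    have hxnU : x ∉ U := fun hU => hUW x hU hxW
    exact ⟨x, by simp [hV₂_def, memS₂, hxSF, hxd, hxnU]⟩
  · intro x hx
    simp only [hU₂_def, hV₂_def, Finset.mem_filter] at hx ⊢
    tauto
  · intro x hx
    simp only [hU₂_def, Finset.mem_filter, memS₂] at hx
    obtain ⟨⟨hxSF, hxd⟩, hxU⟩ := hx
    have htr := trans x σU hxSF hxd (fun j hj => hUp _ (runTypeU x hxU j hj))
    rw [hunion, memS₂]
    exact ⟨htr.1, htr.2⟩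
  · intro x hx
    simp only [hU₂_def, Finset.mem_filter, memS₂] at hx
    obtain ⟨⟨hxSF, hxd⟩, hxU⟩ := hx
    have htr := trans x (-σU) hxSF hxd (fun j hj => by
      have := hUm _ (runTypeU x hxU j hj)
      simpa [sub_eq_add_neg] using this)
    rw [hunion, memS₂]
    have : x - σU = x + (-σU) := by ring
    rw [this]
    exact ⟨htr.1, htr.2⟩
  · intro x hx
    simp only [hV₂_def, Finset.mem_filter, memS₂] at hx
    obtain ⟨⟨hxSF, hxd⟩, hxnU⟩ := hx
    have hxW : x ∈ W := hdich x ((memSF x).mp hxSF).1 hxnU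
    have htr := trans x σW hxSF hxd (fun j hj => hWp _ (runTypeW x hxW j hj))
    rw [hunion, memS₂]
    exact ⟨htr.1, htr.2⟩
  · intro x hx
    simp only [hV₂_def, Finset.mem_filter, memS₂] at hx
    obtain ⟨⟨hxSF, hxd⟩, hxnU⟩ := hx
    have hxW : x ∈ W := hdich x ((memSF x).mp hxSF).1 hxnU
    have htr := trans x (-σW) hxSF hxd (fun j hj => by
      have := hWm _ (runTypeW x hxW j hj)
      simpa [sub_eq_add_neg] using this)
    rw [hunion, memS₂]
    have : x - σW = x + (-σW) := by ring
    rw [this]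
    exact ⟨htr.1, htr.2⟩
  · intro x hx y hy hxy
    rw [hunion, memS₂] at hx hy
    have hxSt := (memSF x).mp hx.1
    have hynV := ((memSF y).mp hy.1).1
    have : x - b = y := by rw [← hxy]; ring
    rw [this] at hxSt
    exact hynV hxSt.2
  · rw [hunion]
    have hinj : Set.InjOn (fun x => x - b) S₂ := by
      intro x hx y hy hxy
      simpa using sub_left_injective hxy
    have hmap : ∀ x ∈ S₂, x - b ∈ V := by
      intro x hx
      rw [memS₂] at hx
      exact ((memSF x).mp hx.1).2
    calc S₂.card = (S₂.image (fun x => x - b)).card := (Finset.card_image_of_injOn hinj).symm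
    _ ≤ V.card := Finset.card_le_card (by
        intro y hy
        rw [Finset.mem_image] at hy
        obtain ⟨x, hx, rfl⟩ := hy
        exact hmap x hx)

open Finset

private lemma TLem {p : ℕ} [Fact p.Prime] :
    ∀ (N : ℕ) (U V : Finset (ZMod p)) (a b c : ZMod p), a ≠ 0 → b ≠ 0 → c ≠ 0 →
    U.Nonempty → V.Nonempty → (∀ x ∈ U, x ∉ V) → (U ∪ V).card ≤ N →
    (∀ u ∈ U, u + b ∈ U ∪ V) → (∀ u ∈ U, u - b ∈ U ∪ V) →
    (∀ v ∈ V, v + c ∈ U ∪ V) → (∀ v ∈ V, v - c ∈ U ∪ V) →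
    (∀ x ∈ U ∪ V, ∀ y ∈ U ∪ V, x - y ≠ a) → False := by
  intro N
  induction N with
  | zero =>
    intro U V a b c _ _ _ hUne _ _ hcard _ _ _ _ _
    obtain ⟨u, hu⟩ := hUne
    have : 0 < (U ∪ V).card := Finset.card_pos.mpr ⟨u, Finset.mem_union_left _ hu⟩
    omega
  | succ N ih =>
    intro U V a b c ha hb hc hUne hVne hdisj hcard hUp hUm hVp hVm hsparse
    classical
    set W : Finset (ZMod p) := univ \ (U ∪ V) with hW_def
    have hcore := core_reduction V U W b a c hb ha hc hVne hUne
      hdisj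
      (by intro x hx; rw [hW_def, Finset.mem_sdiff] at hx
          intro hV; exact hx.2 (Finset.mem_union_right _ hV))
      (by intro x hx; rw [hW_def, Finset.mem_sdiff]
          intro hW; exact hW.2 (Finset.mem_union_left _ hx))
      (by intro x hxV hxU; rw [hW_def, Finset.mem_sdiff]
          refine ⟨Finset.mem_univ _, ?_⟩
          rw [Finset.mem_union]; tauto)
      (by intro x hx hnV
          have := hUp x hx
          rw [Finset.mem_union] at this; tauto)
      (by intro x hx hnV
          rw [hW_def, Finset.mem_sdiff] at hx ⊢
          refine ⟨Finset.mem_univ _, fun hmem => ?_⟩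
          rw [Finset.mem_union] at hmem
          rcases hmem with hU | hV
          · have := hUm _ hU
            have h2 : x + b - b = x := by ring
            rw [h2] at this
            exact hx.2 this
          · exact hnV hV)
      (by intro x hx
          intro hmem
          exact hsparse (x + a) (Finset.mem_union_right _ hmem) x (Finset.mem_union_left _ hx)
            (by ring))
      (by intro x hx
          intro hmem
          exact hsparse x (Finset.mem_union_left _ hx) (x - a) (Finset.mem_union_right _ hmem)
            (by ring))
      (by intro x hx
          rw [hW_def, Finset.mem_sdiff] at hx
          intro hmem
          have := hVm _ hmem
          have h2 : x + c - c = x := by ring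
          rw [h2] at this
          exact hx.2 this)
      (by intro x hx
          rw [hW_def, Finset.mem_sdiff] at hx
          intro hmem
          have := hVp _ hmem
          have h2 : x - c + c = x := by ring
          rw [h2] at this
          exact hx.2 this)
    obtain ⟨U₂, V₂, hU₂ne, hV₂ne, hdisj₂, hU₂p, hU₂m, hV₂p, hV₂m, hsparse₂, hcard₂⟩ := hcore
    have hVcard : V.card ≤ N := by
      have h1 : (U ∪ V).card = U.card + V.card := Finset.card_union_of_disjoint
        (Finset.disjoint_left.mpr hdisj)
      have h2 : 0 < U.card := Finset.card_pos.mpr hUne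
      omega
    exact ih U₂ V₂ b a c hb ha hc hU₂ne hV₂ne hdisj₂ (le_trans hcard₂ hVcard)
      hU₂p hU₂m hV₂p hV₂m hsparse₂


private lemma fin3_exists_other : ∀ α : Fin 3, ∃ β γ : Fin 3, β ≠ α ∧ γ ≠ α ∧ β ≠ γ := by
  decide

private lemma fin3_tri : ∀ α β γ x : Fin 3, β ≠ α → γ ≠ α → β ≠ γ →
    x = α ∨ x = β ∨ x = γ := by decide


/-- Let `p` be an odd prime and `c : ℤ_p → {R,G,B}` an exact
3-coloring that is rainbow-free for `x - y = z^k`. Then `0` is the only element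
of its color class. -/
theorem stmt_12 (k p : ℕ) (hk : 2 ≤ k) (hp : p.Prime) (hodd : Odd p)
    (c : ZMod p → Fin 3) (hsurj : Function.Surjective c)
    (hrf : ∀ b d : ZMod p,
      ¬ (c (b + d ^ k) ≠ c b ∧ c (b + d ^ k) ≠ c d ∧ c b ≠ c d)) :
    ∀ a : ZMod p, a ≠ 0 → c a ≠ c 0 := by
  haveI : Fact p.Prime := ⟨hp⟩
  intro a ha hca
  classical
  obtain ⟨β, γ, hβα, hγα, hβγ⟩ := fin3_exists_other (c 0)
  obtain ⟨d, hd⟩ := hsurj β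
  obtain ⟨e, he⟩ := hsurj γ
  have hu : a ^ k ≠ 0 := pow_ne_zero k ha
  have ht : e ^ k ≠ 0 := by
    apply pow_ne_zero; intro h; rw [h] at he; exact hγα he.symm
  have hs : d ^ k ≠ 0 := by
    apply pow_ne_zero; intro h; rw [h] at hd; exact hβα hd.symm
  set A : Finset (ZMod p) := Finset.univ.filter (fun x => c x = c 0) with hA_def
  set B : Finset (ZMod p) := Finset.univ.filter (fun x => c x = β) with hB_def
  set C : Finset (ZMod p) := Finset.univ.filter (fun x => c x = γ) with hC_def
  have memA : ∀ x : ZMod p, x ∈ A ↔ c x = c 0 := by intro x; simp [hA_def]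
  have memB : ∀ x : ZMod p, x ∈ B ↔ c x = β := by intro x; simp [hB_def]
  have memC : ∀ x : ZMod p, x ∈ C ↔ c x = γ := by intro x; simp [hC_def]
  have hcore := core_reduction (p := p) A B C (a ^ k) (e ^ k) (d ^ k) hu ht hs
    ⟨0, (memA 0).mpr rfl⟩ ⟨d, (memB d).mpr hd⟩
    (by intro x hx h
        rw [memB] at hx; rw [memA] at h; exact hβα (hx ▸ h))
    (by intro x hx h
        rw [memC] at hx; rw [memA] at h; exact hγα (hx ▸ h))
    (by intro x hx h
        rw [memB] at hx; rw [memC] at h; exact hβγ (hx ▸ h))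
    (by intro x hxA hxB
        rw [memA] at hxA; rw [memB] at hxB; rw [memC]
        rcases fin3_tri (c 0) β γ (c x) hβα hγα hβγ with h | h | h
        · exact absurd h hxA
        · exact absurd h hxB
        · exact h)
    (by -- B is closed along a^k steps while avoiding A
        intro x hx hnA
        rw [memB] at hx; rw [memA] at hnA; rw [memB]
        rcases fin3_tri (c 0) β γ (c (x + a ^ k)) hβα hγα hβγ with h | h | h
        · exact absurd h hnA
        · exact h
        · exact absurd (And.intro (by rw [h, hx]; exact hβγ.symm)
            (And.intro (by rw [h, hca]; exact hγα) (by rw [hx, hca]; exact hβα))) (hrf x a))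
    (by -- C is closed along a^k steps while avoiding A
        intro x hx hnA
        rw [memC] at hx; rw [memA] at hnA; rw [memC]
        rcases fin3_tri (c 0) β γ (c (x + a ^ k)) hβα hγα hβγ with h | h | h
        · exact absurd h hnA
        · exact absurd (And.intro (by rw [h, hx]; exact hβγ)
            (And.intro (by rw [h, hca]; exact hβα) (by rw [hx, hca]; exact hγα))) (hrf x a)
        · exact h)
    (by -- x ∈ B → x + e^k ∉ A
        intro x hx h
        rw [memB] at hx; rw [memA] at h
        exact hrf x e ⟨by rw [h, hx]; exact hβα.symm,
          by rw [h, he]; exact hγα.symm, by rw [hx, he]; exact hβγ⟩)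
    (by -- x ∈ B → x - e^k ∉ A
        intro x hx h
        rw [memB] at hx; rw [memA] at h
        have hxe : x - e ^ k + e ^ k = x := by ring
        exact hrf (x - e ^ k) e ⟨by rw [hxe, hx, h]; exact hβα,
          by rw [hxe, hx, he]; exact hβγ, by rw [h, he]; exact hγα.symm⟩)
    (by -- x ∈ C → x + d^k ∉ A
        intro x hx h
        rw [memC] at hx; rw [memA] at h
        exact hrf x d ⟨by rw [h, hx]; exact hγα.symm,
          by rw [h, hd]; exact hβα.symm, by rw [hx, hd]; exact hβγ.symm⟩)
    (by -- x ∈ C → x - d^k ∉ A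
        intro x hx h
        rw [memC] at hx; rw [memA] at h
        have hxd : x - d ^ k + d ^ k = x := by ring
        exact hrf (x - d ^ k) d ⟨by rw [hxd, hx, h]; exact hγα,
          by rw [hxd, hx, hd]; exact hβγ.symm, by rw [h, hd]; exact hβα.symm⟩)
  obtain ⟨U₂, V₂, hU₂ne, hV₂ne, hdisj₂, hU₂p, hU₂m, hV₂p, hV₂m, hsparse₂, _⟩ := hcore
  exact TLem (U₂ ∪ V₂).card U₂ V₂ (a ^ k) (e ^ k) (d ^ k) hu ht hs hU₂ne hV₂ne hdisj₂ le_rfl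
    hU₂p hU₂m hV₂p hV₂m hsparse₂
end

section
/- Let f : ℤ_n → ℤ_n be a function and let G be the functional digraph on vertex set ℤ_n with a directed edge from a to f(a) for each a ∈ ℤ_n. Let c : ℤ_n → {1,…,t} be a coloring of ℤ_n that is rainbow-free for the equation x − y = f(z) (i.e., there is no triple (a, b, d) in ℤ_n with a − b = f(d) and c(a), c(b), c(d) pairwise distinct). If D is a weakly connected component of G such that c(0) is not among the colors of the vertices of D, then D is monochromatic: all vertices of D have the same color. -/
/-- Let `f : ℤ_n → ℤ_n` and let `G` be its functional digraph.
If `c : ℤ_n → {1,…,t}` is rainbow-free for `x - y = f(z)` and `D` is a weakly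
connected component of `G` (here: the component of a vertex `v`, i.e. the set of
vertices reachable from `v` in the symmetrization of the edge relation) none of
whose vertices has the color `c 0`, then `D` is monochromatic. -/
theorem stmt_13 (n t : ℕ) (f : ZMod n → ZMod n) (c : ZMod n → Fin t)
    (hrf : ∀ b d : ZMod n,
      ¬ (c (b + f d) ≠ c b ∧ c (b + f d) ≠ c d ∧ c b ≠ c d))
    (v : ZMod n)
    (hD : ∀ x : ZMod n,
      Relation.ReflTransGen (fun a b : ZMod n => f a = b ∨ f b = a) v x →
      c x ≠ c 0) :
    ∀ x y : ZMod n,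
      Relation.ReflTransGen (fun a b : ZMod n => f a = b ∨ f b = a) v x →
      Relation.ReflTransGen (fun a b : ZMod n => f a = b ∨ f b = a) v y →
      c x = c y := by
  have key : ∀ x : ZMod n,
      Relation.ReflTransGen (fun a b : ZMod n => f a = b ∨ f b = a) v x →
      c x = c v := by
    intro x hx
    induction hx with
    | refl => rfl
    | tail hab e ih =>
      rename_i p q
      have hp : Relation.ReflTransGen (fun a b : ZMod n => f a = b ∨ f b = a) v p := hab
      have hq : Relation.ReflTransGen (fun a b : ZMod n => f a = b ∨ f b = a) v q :=
        hp.tail e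
      rcases e with e | e
      · have := hrf 0 p
        have h1 : c (0 + f p) = c (f p) := by rw [zero_add]
        rw [h1, e] at this
        have hq0 := hD q hq
        have hp0 := hD p hp
        have : c q = c p := by
          by_contra hne
          exact this ⟨hq0, hne, fun h => hp0 h.symm⟩
        rw [this, ih]
      · have := hrf 0 q
        have h1 : c (0 + f q) = c (f q) := by rw [zero_add]
        rw [h1, e] at this
        have hq0 := hD q hq
        have hp0 := hD p hp
        have : c p = c q := by
          by_contra hne
          exact this ⟨hp0, hne, fun h => hq0 h.symm⟩
        rw [← this, ih]
  intro x y hx hy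
  rw [key x hx, key y hy]
end

section
/- Let k ≥ 2, let p be an odd prime, and let c : ℤ_p → {R, G, B} be an exact 3-coloring of ℤ_p. Then c is rainbow-free for x − y = z^k if and only if all three of the following hold: (1) 0 is the only element of its color class; (2) every weakly connected component of the digraph G_p^k is monochromatic under c; (3) c(a) = c(−a) for all a ∈ ℤ_p. -/
namespace Stmt14

variable {p : ℕ} [Fact p.Prime]

def exitSet (c : ZMod p → Fin 3) (u x : ZMod p) : Set ℕ :=
  {n : ℕ | c (x + (n + 1 : ℕ) * u) ≠ c x}

noncomputable def bd (c : ZMod p → Fin 3) (u x : ZMod p) : ℕ := sInf (exitSet c u x)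

lemma fin3_succ_ne : ∀ a : Fin 3, a + 1 ≠ a := by decide

lemma exitSet_nonempty (c : ZMod p → Fin 3) (hs : Function.Surjective c)
    (u : ZMod p) (hu : u ≠ 0) (x : ZMod p) : (exitSet c u x).Nonempty := by
  obtain ⟨y, hy⟩ := hs (c x + 1)
  have hyx : y ≠ x := by intro h; rw [h] at hy; exact fin3_succ_ne _ hy.symm
  have hq0 : (y - x) * u⁻¹ ≠ 0 := mul_ne_zero (sub_ne_zero.mpr hyx) (inv_ne_zero hu)
  have hvpos : 0 < ((y - x) * u⁻¹).val := ZMod.val_pos.mpr hq0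
  refine ⟨((y - x) * u⁻¹).val - 1, ?_⟩
  have hcast : ((((y - x) * u⁻¹).val - 1 + 1 : ℕ) : ZMod p) = (y - x) * u⁻¹ := by
    rw [Nat.sub_add_cancel hvpos]
    exact ZMod.natCast_rightInverse _
  show c (x + _ * u) ≠ c x
  rw [hcast]
  have : x + (y - x) * u⁻¹ * u = y := by
    rw [mul_assoc, inv_mul_cancel₀ hu, mul_one]; ring
  rw [this, hy]
  exact fin3_succ_ne _

section Basic

variable (c : ZMod p → Fin 3) (u x : ZMod p)

lemma bd_exit (hne : (exitSet c u x).Nonempty) :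
    c (x + (bd c u x + 1 : ℕ) * u) ≠ c x := Nat.sInf_mem hne

lemma run_const {j : ℕ} (hj : j ≤ bd c u x) : c (x + (j : ℕ) * u) = c x := by
  cases j with
  | zero => simp
  | succ m =>
    have : m < bd c u x := lt_of_lt_of_le (Nat.lt_succ_self m) hj
    have h := Nat.notMem_of_lt_sInf this
    simpa [exitSet] using h

lemma bd_eq_of (n : ℕ) (hlow : ∀ m < n, c (x + (m + 1 : ℕ) * u) = c x)
    (hexit : c (x + (n + 1 : ℕ) * u) ≠ c x) : bd c u x = n := by
  have h1 : bd c u x ≤ n := Nat.sInf_le (show n ∈ exitSet c u x from hexit)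
  rcases lt_or_eq_of_le h1 with h | h
  · have hmem : bd c u x ∈ exitSet c u x :=
      Nat.sInf_mem ⟨n, show n ∈ exitSet c u x from hexit⟩
    exact absurd (hlow _ h) hmem
  · exact h

end Basic

end Stmt14

namespace Stmt14x
open Stmt14

variable {p : ℕ} [Fact p.Prime]

def Touch (c : ZMod p → Fin 3) (u : ZMod p) (z : Fin 3) : Prop :=
  ∀ x, c (x + u) = c x ∨ c (x + u) = z ∨ c x = z

lemma Touch.neg {c : ZMod p → Fin 3} {u : ZMod p} {z : Fin 3} (h : Touch c u z) :
    Touch c (-u) z := by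
  intro x
  have h' := h (x + -u)
  simp only [neg_add_cancel_right] at h'
  rcases h' with h' | h' | h'
  · exact Or.inl h'.symm
  · exact Or.inr (Or.inr h')
  · exact Or.inr (Or.inl h')

variable {c : ZMod p → Fin 3}

lemma step_same (hs : Function.Surjective c) {u : ZMod p} (hu : u ≠ 0) {x : ZMod p}
    (h : c (x + u) = c x) : bd c u x = bd c u (x + u) + 1 := by
  apply bd_eq_of
  · intro m hm
    cases m with
    | zero =>
      have e : x + ((0 + 1 : ℕ) : ZMod p) * u = x + u := by push_cast; ring
      rw [e, h]
    | succ m =>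
      have hm' : m + 1 ≤ bd c u (x + u) := by omega
      have e : x + ((m + 1 + 1 : ℕ) : ZMod p) * u = (x + u) + ((m + 1 : ℕ) : ZMod p) * u := by
        push_cast; ring
      rw [e, run_const c u (x + u) hm', h]
  · have e : x + ((bd c u (x + u) + 1 + 1 : ℕ) : ZMod p) * u
        = (x + u) + ((bd c u (x + u) + 1 : ℕ) : ZMod p) * u := by push_cast; ring
    rw [e, ← h]
    exact fun hc => bd_exit c u (x + u) (exitSet_nonempty c hs u hu (x + u)) (by rw [h] at hc ⊢; exact hc)

lemma exit_color (hs : Function.Surjective c) {u : ZMod p} (hu : u ≠ 0) {z : Fin 3}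
    (ru : Touch c u z) {x : ZMod p} (hx : c x ≠ z) :
    c (x + ((bd c u x + 1 : ℕ) : ZMod p) * u) = z := by
  have hrun : c (x + ((bd c u x : ℕ) : ZMod p) * u) = c x := run_const c u x le_rfl
  have e : x + ((bd c u x : ℕ) : ZMod p) * u + u = x + ((bd c u x + 1 : ℕ) : ZMod p) * u := by
    push_cast; ring
  have hexit := bd_exit c u x (exitSet_nonempty c hs u hu x)
  rcases ru (x + ((bd c u x : ℕ) : ZMod p) * u) with h' | h' | h'
  · rw [e, hrun] at h'; exact absurd h' hexit
  · rw [e] at h'; exact h'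
  · rw [hrun] at h'; exact absurd h' hx

lemma align (hs : Function.Surjective c) {u v : ZMod p} (hu : u ≠ 0) {zu zv : Fin 3}
    (ru : Touch c u zu) (rv : Touch c v zv) (hzz : zu ≠ zv) {x : ZMod p}
    (h1 : c x ≠ zu) (h2 : c x ≠ zv) (hxv : c (x + v) = c x) :
    bd c u (x + v) = bd c u x := by
  have key : ∀ j, j ≤ bd c u x → c (x + v + (j : ℕ) * u) = c x := by
    intro j
    induction j with
    | zero => intro _; simpa using hxv
    | succ m ih =>
      intro hj
      have hm := ih (Nat.le_of_succ_le hj)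
      have hrow : c (x + ((m + 1 : ℕ) : ZMod p) * u) = c x := run_const c u x hj
      have t1 := rv (x + ((m + 1 : ℕ) : ZMod p) * u)
      have e1 : x + ((m + 1 : ℕ) : ZMod p) * u + v = x + v + ((m + 1 : ℕ) : ZMod p) * u := by
        ring
      rw [e1, hrow] at t1
      have t2 := ru (x + v + ((m : ℕ) : ZMod p) * u)
      have e2 : x + v + ((m : ℕ) : ZMod p) * u + u = x + v + ((m + 1 : ℕ) : ZMod p) * u := by
        push_cast; ring
      rw [e2, hm] at t2
      rcases t1 with t1 | t1 | t1
      · exact t1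
      · rcases t2 with t2 | t2 | t2
        · exact t2
        · exact absurd (t1.symm.trans t2) (Ne.symm hzz)
        · exact absurd t2 h1
      · exact absurd t1 h2
  apply bd_eq_of
  · intro m hm
    rw [key (m + 1) hm, hxv]
  · have hw : c (x + ((bd c u x + 1 : ℕ) : ZMod p) * u) = zu := exit_color hs hu ru h1
    have t := rv (x + ((bd c u x + 1 : ℕ) : ZMod p) * u)
    have e : x + ((bd c u x + 1 : ℕ) : ZMod p) * u + v
        = x + v + ((bd c u x + 1 : ℕ) : ZMod p) * u := by ring
    rw [e, hw] at t
    rw [hxv]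
    rcases t with t | t | t
    · rw [t]; exact Ne.symm h1
    · rw [t]; exact Ne.symm h2
    · exact absurd t hzz

lemma stretch {w v : ZMod p} {ca cb cg : Fin 3}
    (rw' : Touch c w ca) (rv : Touch c v cb)
    (hga : cg ≠ ca) (hab : ca ≠ cb) (hgb : cg ≠ cb) {x : ZMod p} {n : ℕ}
    (hrow : ∀ i ≤ n, c (x + (i : ℕ) * w) = cg)
    (hbase : c (x + v) = cb) :
    ∀ i ≤ n, c (x + (i : ℕ) * w + v) = cb := by
  intro i
  induction i with
  | zero => intro _; simpa using hbase
  | succ m ih =>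
    intro hi
    have hm := ih (Nat.le_of_succ_le hi)
    have t1 := rv (x + ((m + 1 : ℕ) : ZMod p) * w)
    rw [hrow (m + 1) hi] at t1
    have t2 := rw' (x + ((m : ℕ) : ZMod p) * w + v)
    have e2 : x + ((m : ℕ) : ZMod p) * w + v + w = x + ((m + 1 : ℕ) : ZMod p) * w + v := by
      push_cast; ring
    rw [e2, hm] at t2
    rcases t2 with t2 | t2 | t2
    · exact t2
    · rcases t1 with t1 | t1 | t1
      · exact absurd (t1.symm.trans t2) hga
      · exact t1
      · exact absurd t1 hgb
    · exact absurd t2.symm hab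

lemma stage (hs : Function.Surjective c) {u1 u2 : ZMod p} (hu1 : u1 ≠ 0) (hu2 : u2 ≠ 0)
    {ca cb cg : Fin 3} (r1 : Touch c u1 ca) (r2 : Touch c u2 cb)
    (hba : cb ≠ ca) (hga : cg ≠ ca) (hgb : cg ≠ cb)
    {W T B : ℕ} (hmax : ∀ y, c y = cb ∨ c y = cg → bd c u1 y + bd c (-u1) y + 1 ≤ W)
    {x : ZMod p} (hx : c x = cg) (hT : bd c u1 x = T) (hB : bd c (-u1) x = B)
    (hW : T + B + 1 = W) :
    c (x + ((bd c u2 x + 1 : ℕ) : ZMod p) * u2) = cb ∧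
    bd c u1 (x + ((bd c u2 x + 1 : ℕ) : ZMod p) * u2) = T ∧
    bd c (-u1) (x + ((bd c u2 x + 1 : ℕ) : ZMod p) * u2) = B ∧
    (∀ j ≤ bd c u2 x + 1,
      c (x + ((j : ℕ) : ZMod p) * u2 + ((B + 1 : ℕ) : ZMod p) * (-u1)) = ca) := by
  have hu1' : -u1 ≠ 0 := neg_ne_zero.mpr hu1
  set m := bd c u2 x with hm
  set y := x + ((m + 1 : ℕ) : ZMod p) * u2 with hy
  -- climb preserves color and run data
  have hclimb : ∀ j ≤ m, c (x + ((j : ℕ) : ZMod p) * u2) = cg ∧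
      bd c u1 (x + ((j : ℕ) : ZMod p) * u2) = T ∧
      bd c (-u1) (x + ((j : ℕ) : ZMod p) * u2) = B := by
    intro j
    induction j with
    | zero => intro _; simpa using ⟨hx, hT, hB⟩
    | succ n ih =>
      intro hj
      obtain ⟨hc0, hb1, hb2⟩ := ih (Nat.le_of_succ_le hj)
      have hcol : c (x + ((n + 1 : ℕ) : ZMod p) * u2) = cg := by
        rw [run_const c u2 x hj, hx]
      have e : x + ((n : ℕ) : ZMod p) * u2 + u2 = x + ((n + 1 : ℕ) : ZMod p) * u2 := by
        push_cast; ring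
      have hxv : c (x + ((n : ℕ) : ZMod p) * u2 + u2) = c (x + ((n : ℕ) : ZMod p) * u2) := by
        rw [e, hcol, hc0]
      have a1 := align hs hu1 r1 r2 (fun h => hba h.symm)
        (by rw [hc0]; exact hga) (by rw [hc0]; exact hgb) hxv
      have a2 := align hs hu1' r1.neg r2 (fun h => hba h.symm)
        (by rw [hc0]; exact hga) (by rw [hc0]; exact hgb) hxv
      rw [e] at a1 a2
      exact ⟨hcol, a1.trans hb1, a2.trans hb2⟩
  obtain ⟨hxm, hxmT, hxmB⟩ := hclimb m le_rfl
  set xm := x + ((m : ℕ) : ZMod p) * u2 with hxm'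
  have hyxm : y = xm + u2 := by rw [hy, hxm']; push_cast; ring
  -- color of y
  have hyc : c y = cb := by
    have := exit_color hs hu2 r2 (x := x) (by rw [hx]; exact hgb)
    rw [← hm] at this; exact this
  -- stretches
  have hrowU : ∀ i ≤ T, c (xm + ((i : ℕ) : ZMod p) * u1) = cg := by
    intro i hi
    rw [run_const c u1 xm (by rw [hxmT]; exact hi), hxm]
  have hrowD : ∀ i ≤ B, c (xm + ((i : ℕ) : ZMod p) * (-u1)) = cg := by
    intro i hi
    rw [run_const c (-u1) xm (by rw [hxmB]; exact hi), hxm]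
  have hbase : c (xm + u2) = cb := by rw [← hyxm]; exact hyc
  have hstU : ∀ i ≤ T, c (xm + ((i : ℕ) : ZMod p) * u1 + u2) = cb :=
    stretch r1 r2 hga (fun h => hba h.symm) hgb hrowU hbase
  have hstD : ∀ i ≤ B, c (xm + ((i : ℕ) : ZMod p) * (-u1) + u2) = cb :=
    stretch r1.neg r2 hga (fun h => hba h.symm) hgb hrowD hbase
  -- generic end lemma applied twice, via the size bound
  have hsize : ¬ (T + 1 ≤ bd c u1 y ∧ B ≤ bd c (-u1) y) ∧
      ¬ (T ≤ bd c u1 y ∧ B + 1 ≤ bd c (-u1) y) := by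
    constructor <;> (rintro ⟨h1', h2'⟩; have := hmax y (Or.inl hyc); omega)
  -- cells of the stretch written in terms of y
  have ecell : ∀ (w : ZMod p) (i : ℕ), xm + ((i : ℕ) : ZMod p) * w + u2
      = y + ((i : ℕ) : ZMod p) * w := by
    intro w i; rw [hyxm]; ring
  have hygeT : ∀ n' ≤ T, n' ≤ bd c u1 y := by
    intro n' hn'
    by_contra hlt
    push_neg at hlt
    have hex := bd_exit c u1 y (exitSet_nonempty c hs u1 hu1 y)
    have : c (y + ((bd c u1 y + 1 : ℕ) : ZMod p) * u1) = cb := by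
      rw [← ecell u1 (bd c u1 y + 1)]
      exact hstU _ (by omega)
    rw [this, hyc] at hex; exact hex rfl
  have hygeB : ∀ n' ≤ B, n' ≤ bd c (-u1) y := by
    intro n' hn'
    by_contra hlt
    push_neg at hlt
    have hex := bd_exit c (-u1) y (exitSet_nonempty c hs (-u1) hu1' y)
    have : c (y + ((bd c (-u1) y + 1 : ℕ) : ZMod p) * (-u1)) = cb := by
      rw [← ecell (-u1) (bd c (-u1) y + 1)]
      exact hstD _ (by omega)
    rw [this, hyc] at hex; exact hex rfl
  -- top end is ca
  have hTend : c (y + ((T + 1 : ℕ) : ZMod p) * u1) = ca := by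
    have heT : c (xm + ((T + 1 : ℕ) : ZMod p) * u1) = ca := by
      have := exit_color hs hu1 r1 (x := xm) (by rw [hxm]; exact hga)
      rw [hxmT] at this; exact this
    rcases r2 (xm + ((T + 1 : ℕ) : ZMod p) * u1) with h' | h' | h'
    · rw [ecell u1 (T + 1)] at h'; rw [h', heT]
    · -- would give a too-long cb-run at y
      exfalso
      rw [ecell u1 (T + 1)] at h'
      apply hsize.1
      constructor
      · by_contra hlt
        push_neg at hlt
        have hex := bd_exit c u1 y (exitSet_nonempty c hs u1 hu1 y)
        have hco : c (y + ((bd c u1 y + 1 : ℕ) : ZMod p) * u1) = cb := by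
          rcases Nat.lt_or_ge (bd c u1 y) T with hcase | hcase
          · rw [← ecell u1 (bd c u1 y + 1)]; exact hstU _ (by omega)
          · have : bd c u1 y = T := le_antisymm (by omega) (hygeT T le_rfl)
            rw [this]; exact h'
        rw [hco, hyc] at hex; exact hex rfl
      · exact hygeB B le_rfl
    · rw [heT] at h'; exact absurd h' hba.symm
  -- bottom end is ca
  have hBend : c (y + ((B + 1 : ℕ) : ZMod p) * (-u1)) = ca := by
    have heB : c (xm + ((B + 1 : ℕ) : ZMod p) * (-u1)) = ca := by
      have := exit_color hs hu1' r1.neg (x := xm) (by rw [hxm]; exact hga)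
      rw [hxmB] at this; exact this
    rcases r2 (xm + ((B + 1 : ℕ) : ZMod p) * (-u1)) with h' | h' | h'
    · rw [ecell (-u1) (B + 1)] at h'; rw [h', heB]
    · exfalso
      rw [ecell (-u1) (B + 1)] at h'
      apply hsize.2
      constructor
      · exact hygeT T le_rfl
      · by_contra hlt
        push_neg at hlt
        have hex := bd_exit c (-u1) y (exitSet_nonempty c hs (-u1) hu1' y)
        have hco : c (y + ((bd c (-u1) y + 1 : ℕ) : ZMod p) * (-u1)) = cb := by
          rcases Nat.lt_or_ge (bd c (-u1) y) B with hcase | hcase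
          · rw [← ecell (-u1) (bd c (-u1) y + 1)]; exact hstD _ (by omega)
          · have : bd c (-u1) y = B := le_antisymm (by omega) (hygeB B le_rfl)
            rw [this]; exact h'
        rw [hco, hyc] at hex; exact hex rfl
    · rw [heB] at h'; exact absurd h' hba.symm
  -- exact run data at y
  have hyT : bd c u1 y = T := by
    apply bd_eq_of
    · intro n' hn'
      rw [← ecell u1 (n' + 1), hstU _ (by omega), hyc]
    · rw [hTend, hyc]; exact Ne.symm hba
  have hyB : bd c (-u1) y = B := by
    apply bd_eq_of
    · intro n' hn'
      rw [← ecell (-u1) (n' + 1), hstD _ (by omega), hyc]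
    · rw [hBend, hyc]; exact Ne.symm hba
  refine ⟨hyc, hyT, hyB, ?_⟩
  -- flank cells
  intro j hj
  rcases Nat.lt_or_ge j (m + 1) with hcase | hcase
  · obtain ⟨hc0, _, hb2⟩ := hclimb j (by omega)
    have := exit_color hs hu1' r1.neg (x := x + ((j : ℕ) : ZMod p) * u2)
      (by rw [hc0]; exact hga)
    rw [hb2] at this; exact this
  · have hjm : j = m + 1 := by omega
    subst hjm
    have := exit_color hs hu1' r1.neg (x := y) (by rw [hyc]; exact hba)
    rw [hyB] at this
    rw [hy] at this
    exact this

lemma core (hs : Function.Surjective c) {u1 u2 u3 : ZMod p}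
    (hu1 : u1 ≠ 0) (hu2 : u2 ≠ 0) (hu3 : u3 ≠ 0)
    {ca cb cg : Fin 3} (r1 : Touch c u1 ca) (r2 : Touch c u2 cb) (r3 : Touch c u3 cg)
    (hab : ca ≠ cb) (hag : ca ≠ cg) (hbg : cb ≠ cg)
    {x0 : ZMod p} (hx0 : c x0 = cg)
    (hmax : ∀ y, c y = cb ∨ c y = cg →
      bd c u1 y + bd c (-u1) y + 1 ≤ bd c u1 x0 + bd c (-u1) x0 + 1) : False := by
  have hu1' : -u1 ≠ 0 := neg_ne_zero.mpr hu1
  set T := bd c u1 x0 with hTdef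
  set B := bd c (-u1) x0 with hBdef
  set μ : ZMod p → ℕ := fun z => bd c u3 (z + ((B + 1 : ℕ) : ZMod p) * (-u1)) with hμ
  have hmax' : ∀ y, c y = cg ∨ c y = cb →
      bd c u1 y + bd c (-u1) y + 1 ≤ T + B + 1 := fun y h => hmax y h.symm
  have dbl : ∀ x, c x = cg → bd c u1 x = T → bd c (-u1) x = B →
      ∃ x', (c x' = cg ∧ bd c u1 x' = T ∧ bd c (-u1) x' = B) ∧ μ x' + 1 ≤ μ x := by
    intro x hx hT hB
    -- stage 1 : climb in u2 direction, μ invariant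
    obtain ⟨hyc, hyT, hyB, hflk⟩ := stage hs hu1 hu2 r1 r2 (Ne.symm hab) (Ne.symm hag)
      (Ne.symm hbg) (hmax) hx hT hB rfl
    set m := bd c u2 x with hmdef
    set y := x + ((m + 1 : ℕ) : ZMod p) * u2 with hydef
    have hinv : ∀ j ≤ m + 1,
        bd c u3 (x + ((j : ℕ) : ZMod p) * u2 + ((B + 1 : ℕ) : ZMod p) * (-u1)) = μ x := by
      intro j
      induction j with
      | zero =>
        intro _
        have e0 : x + ((0 : ℕ) : ZMod p) * u2 + ((B + 1 : ℕ) : ZMod p) * (-u1)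
            = x + ((B + 1 : ℕ) : ZMod p) * (-u1) := by push_cast; ring
        rw [e0]
      | succ n ih =>
        intro hj
        have hprev := ih (Nat.le_of_succ_le hj)
        have hcf : c (x + ((n : ℕ) : ZMod p) * u2 + ((B + 1 : ℕ) : ZMod p) * (-u1)) = ca :=
          hflk n (by omega)
        have hcf' : c (x + ((n + 1 : ℕ) : ZMod p) * u2 + ((B + 1 : ℕ) : ZMod p) * (-u1)) = ca :=
          hflk (n + 1) hj
        have e : x + ((n : ℕ) : ZMod p) * u2 + ((B + 1 : ℕ) : ZMod p) * (-u1) + u2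
            = x + ((n + 1 : ℕ) : ZMod p) * u2 + ((B + 1 : ℕ) : ZMod p) * (-u1) := by
          push_cast; ring
        have hxv : c (x + ((n : ℕ) : ZMod p) * u2 + ((B + 1 : ℕ) : ZMod p) * (-u1) + u2)
            = c (x + ((n : ℕ) : ZMod p) * u2 + ((B + 1 : ℕ) : ZMod p) * (-u1)) := by
          rw [e, hcf, hcf']
        have a1 := align hs hu3 r3 r2 hbg.symm
          (by rw [hcf]; exact hag) (by rw [hcf]; exact hab) hxv
        rw [e] at a1
        rw [a1, hprev]
    have hμy : μ y = μ x := hinv (m + 1) le_rfl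
    -- stage 2 : climb in u3 direction, μ decreases
    obtain ⟨hzc, hzT, hzB, hflk2⟩ := stage hs hu1 hu3 r1 r3 (Ne.symm hag) (Ne.symm hab)
      hbg hmax' hyc hyT hyB rfl
    set m2 := bd c u3 y with hm2def
    set z := y + ((m2 + 1 : ℕ) : ZMod p) * u3 with hzdef
    have hdec : ∀ j ≤ m2 + 1,
        bd c u3 (y + ((j : ℕ) : ZMod p) * u3 + ((B + 1 : ℕ) : ZMod p) * (-u1)) + j = μ y := by
      intro j
      induction j with
      | zero =>
        intro _
        have e0 : y + ((0 : ℕ) : ZMod p) * u3 + ((B + 1 : ℕ) : ZMod p) * (-u1)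
            = y + ((B + 1 : ℕ) : ZMod p) * (-u1) := by push_cast; ring
        have hry : μ y = bd c u3 (y + ((B + 1 : ℕ) : ZMod p) * (-u1)) := rfl
        rw [e0, hry, Nat.add_zero]
      | succ n ih =>
        intro hj
        have hprev := ih (Nat.le_of_succ_le hj)
        have hcf : c (y + ((n : ℕ) : ZMod p) * u3 + ((B + 1 : ℕ) : ZMod p) * (-u1)) = ca :=
          hflk2 n (by omega)
        have hcf' : c (y + ((n + 1 : ℕ) : ZMod p) * u3 + ((B + 1 : ℕ) : ZMod p) * (-u1)) = ca :=
          hflk2 (n + 1) hj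
        have e : y + ((n : ℕ) : ZMod p) * u3 + ((B + 1 : ℕ) : ZMod p) * (-u1) + u3
            = y + ((n + 1 : ℕ) : ZMod p) * u3 + ((B + 1 : ℕ) : ZMod p) * (-u1) := by
          push_cast; ring
        have hxv : c (y + ((n : ℕ) : ZMod p) * u3 + ((B + 1 : ℕ) : ZMod p) * (-u1) + u3)
            = c (y + ((n : ℕ) : ZMod p) * u3 + ((B + 1 : ℕ) : ZMod p) * (-u1)) := by
          rw [e, hcf, hcf']
        have s1 := step_same hs hu3 hxv
        rw [e] at s1
        omega
    have hfin := hdec (m2 + 1) le_rfl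
    have hμz : μ z = bd c u3 (y + ((m2 + 1 : ℕ) : ZMod p) * u3 + ((B + 1 : ℕ) : ZMod p) * (-u1)) := rfl
    exact ⟨z, ⟨hzc, hzT, hzB⟩, by omega⟩
  have main : ∀ n : ℕ, ∃ x, (c x = cg ∧ bd c u1 x = T ∧ bd c (-u1) x = B) ∧ μ x + n ≤ μ x0 := by
    intro n
    induction n with
    | zero => exact ⟨x0, ⟨hx0, rfl, rfl⟩, le_rfl⟩
    | succ n ih =>
      obtain ⟨x, ⟨hx, hT, hB⟩, hμx⟩ := ih
      obtain ⟨x', hx', hμ'⟩ := dbl x hx hT hB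
      exact ⟨x', hx', by omega⟩
  obtain ⟨x, _, hcon⟩ := main (μ x0 + 1)
  omega

lemma abstract (hs : Function.Surjective c) (s : Fin 3 → ZMod p) (hs0 : ∀ i, s i ≠ 0)
    (hr : ∀ i, Touch c (s i) i) : False := by
  classical
  set F : Finset (ZMod p) := Finset.univ.filter (fun y => c y = 1 ∨ c y = 2) with hF
  have hFne : F.Nonempty := by
    obtain ⟨y, hy⟩ := hs 1
    exact ⟨y, by simp [hF, hy]⟩
  obtain ⟨x0, hx0F, hx0max⟩ := F.exists_max_image
    (fun y => bd c (s 0) y + bd c (-(s 0)) y + 1) hFne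
  have hx0' : c x0 = 1 ∨ c x0 = 2 := by simpa [hF] using hx0F
  have hmax : ∀ y, c y = 1 ∨ c y = 2 →
      bd c (s 0) y + bd c (-(s 0)) y + 1 ≤ bd c (s 0) x0 + bd c (-(s 0)) x0 + 1 := by
    intro y hy
    exact hx0max y (by simp [hF, hy])
  rcases hx0' with h' | h'
  · exact core hs (hs0 0) (hs0 2) (hs0 1) (hr 0) (hr 2) (hr 1)
      (by decide) (by decide) (by decide) h' (fun y hy => hmax y hy.symm)
  · exact core hs (hs0 0) (hs0 1) (hs0 2) (hr 0) (hr 1) (hr 2)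
      (by decide) (by decide) (by decide) h' hmax

lemma fin3_cover : ∀ x y z w : Fin 3, x ≠ y → x ≠ z → y ≠ z → w = x ∨ w = y ∨ w = z := by
  decide

end Stmt14x


/-- Weak connectivity in the functional digraph `G_p^k` of `x ↦ x^k` on `ℤ_p`:
the reflexive-transitive closure of the symmetrized edge relation. -/
def ConnGpk (p k : ℕ) (x y : ZMod p) : Prop :=
  Relation.ReflTransGen (fun a b : ZMod p => a ^ k = b ∨ b ^ k = a) x y

/-- Let `p` be an odd prime and `c : ℤ_p → {R,G,B}` an exact
3-coloring. Then `c` is rainbow-free for `x - y = z^k` iff (1) `0` is alone in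
its color class, (2) every weakly connected component of `G_p^k` is
monochromatic, and (3) `c a = c (-a)` for all `a`. -/
theorem stmt_14 (k p : ℕ) (hk : 2 ≤ k) (hp : p.Prime) (hodd : Odd p)
    (c : ZMod p → Fin 3) (hsurj : Function.Surjective c) :
    (∀ b d : ZMod p,
      ¬ (c (b + d ^ k) ≠ c b ∧ c (b + d ^ k) ≠ c d ∧ c b ≠ c d)) ↔
    ((∀ a : ZMod p, c a = c 0 → a = 0) ∧
     (∀ x y : ZMod p, ConnGpk p k x y → c x = c y) ∧
     (∀ a : ZMod p, c a = c (-a))) := by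
  haveI : Fact p.Prime := ⟨hp⟩
  have hk0 : k ≠ 0 := by omega
  constructor
  · intro RF
    -- (1) : zero is alone in its color class
    have h1 : ∀ a : ZMod p, c a = c 0 → a = 0 := by
      intro a ha
      by_contra ha0
      have hw : ∀ i : Fin 3, ∃ d : ZMod p, d ≠ 0 ∧ c d = i := by
        intro i
        obtain ⟨x, hx⟩ := hsurj i
        by_cases hx0 : x = 0
        · exact ⟨a, ha0, by rw [ha, ← hx, hx0]⟩
        · exact ⟨x, hx0, hx⟩
      choose d hd0 hdc using hw
      refine Stmt14x.abstract hsurj (fun i => d i ^ k) (fun i => pow_ne_zero _ (hd0 i)) ?_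
      intro i x
      by_contra hcon
      push_neg at hcon
      obtain ⟨e1, e2, e3⟩ := hcon
      exact RF x (d i) ⟨e1, by rw [hdc i]; exact e2, by rw [hdc i]; exact e3⟩
    -- (2') : edges are monochromatic
    have h2' : ∀ a : ZMod p, c (a ^ k) = c a := by
      intro a
      by_cases haz : a = 0
      · rw [haz, zero_pow hk0]
      · have hak : a ^ k ≠ 0 := pow_ne_zero _ haz
        have hRF := RF 0 a
        rw [zero_add] at hRF
        have n1 : c (a ^ k) ≠ c 0 := fun h => hak (h1 _ h)
        have n2 : c a ≠ c 0 := fun h => haz (h1 _ h)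
        by_contra hne
        exact hRF ⟨n1, hne, Ne.symm n2⟩
    refine ⟨h1, ?_, ?_⟩
    · -- (2) components monochromatic
      intro x y hconn
      induction hconn with
      | refl => rfl
      | tail _ hedge ih =>
        rename_i b y' _
        rcases hedge with he | he
        · rw [ih, ← he, h2' b]
        · rw [ih, ← h2' y', he]
    · -- (3) symmetry
      intro a
      by_cases haz : a = 0
      · rw [haz, neg_zero]
      · rcases Nat.even_or_odd k with hev | hod
        · have hnp : (-a) ^ k = a ^ k := hev.neg_pow a
          rw [← h2' a, ← h2' (-a), hnp]
        · have hnak : -(a ^ k) ≠ 0 := neg_ne_zero.mpr (pow_ne_zero _ haz)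
          have hneg : c (-(a ^ k)) = c a := by
            have hRF := RF (-(a ^ k)) a
            rw [neg_add_cancel] at hRF
            have n1 : c (-(a ^ k)) ≠ c 0 := fun h => hnak (h1 _ h)
            have n2 : c a ≠ c 0 := fun h => haz (h1 _ h)
            by_contra hne
            exact hRF ⟨Ne.symm n1, Ne.symm n2, hne⟩
          rw [← h2' (-a), hod.neg_pow, hneg]
  · rintro ⟨h1, h2, h3⟩ b d ⟨hab, had, hbd⟩
    have hedge : c (d ^ k) = c d :=
      (h2 d (d ^ k) (Relation.ReflTransGen.single (Or.inl rfl))).symm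
    rcases Stmt14x.fin3_cover (c (b + d ^ k)) (c b) (c d) (c 0) hab had hbd with h' | h' | h'
    · -- b + d^k = 0
      have hz : b + d ^ k = 0 := h1 _ h'.symm
      have hb : b = -(d ^ k) := by linear_combination hz
      rw [hb] at hbd
      rw [← h3 (d ^ k), hedge] at hbd
      exact hbd rfl
    · -- b = 0
      have hz : b = 0 := h1 _ h'.symm
      rw [hz, zero_add, hedge] at had
      exact had rfl
    · -- d = 0
      have hz : d = 0 := h1 _ h'.symm
      rw [hz, zero_pow hk0, add_zero] at hab
      exact hab rfl
end

section
/- Let k be an even integer with k ≥ 2 and let p be an odd prime. Then the digraph G_p^k has exactly two weakly connected components if and only if every prime factor of p − 1 divides k (equivalently, writing k = 2^{α₀} q₁^{α₁} ⋯ q_ℓ^{α_ℓ} with q₁,…,q_ℓ the odd prime factors of k, if and only if p − 1 = 2^{β₀} q₁^{β₁} ⋯ q_ℓ^{β_ℓ} for some exponents β_i ≥ 0). -/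
lemma conn_symm {p k : ℕ} {x y : ZMod p} (h : ConnGpk p k x y) : ConnGpk p k y x :=
  (@Relation.ReflTransGen.symmetric _ _ ⟨fun _ _ h => h.symm.imp id id⟩).symm _ _ h

lemma conn_zero {p k : ℕ} [Fact p.Prime] (hk0 : k ≠ 0) {y : ZMod p}
    (h : ConnGpk p k 0 y) : y = 0 := by
  induction h with
  | refl => rfl
  | tail _ h2 ih =>
    subst ih
    rcases h2 with h | h
    · rw [zero_pow hk0] at h; exact h.symm
    · exact pow_eq_zero_iff hk0 |>.mp h

lemma conn_pow {p k : ℕ} (x : ZMod p) (m : ℕ) : ConnGpk p k x (x ^ (k ^ m)) := by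
  induction m with
  | zero => rw [pow_zero, pow_one]; exact Relation.ReflTransGen.refl
  | succ n ih =>
    refine ih.tail (Or.inl ?_)
    rw [← pow_mul, ← pow_succ]

lemma aux_dvd_pow : ∀ n : ℕ, n ≠ 0 → ∀ k : ℕ, k ≠ 0 →
    (∀ q : ℕ, q.Prime → q ∣ n → q ∣ k) → n ∣ k ^ n := by
  intro n
  induction n using Nat.strong_induction_on with
  | _ n ih =>
    intro hn k hk hq
    rcases eq_or_ne n 1 with rfl | hn1
    · simp
    have h2 : 2 ≤ n := by omega
    have hqp := Nat.minFac_prime hn1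
    set q := n.minFac with hqdef
    have hqd : q ∣ n := Nat.minFac_dvd n
    obtain ⟨m, hm⟩ := hqd
    have hm0 : m ≠ 0 := by rintro rfl; simp at hm; omega
    have hmlt : m < n := by
      have : 2 ≤ q := hqp.two_le
      nlinarith [Nat.pos_of_ne_zero hm0]
    have ihm : m ∣ k ^ m := ih m hmlt hm0 k hk
      (fun r hr hrm => hq r hr (hrm.trans ⟨q, by rw [hm, mul_comm]⟩))
    have hqk : q ∣ k := hq q hqp (Nat.minFac_dvd n)
    calc n = q * m := hm
      _ ∣ k * k ^ m := mul_dvd_mul hqk ihm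
      _ = k ^ (m + 1) := (pow_succ' k m).symm
      _ ∣ k ^ n := pow_dvd_pow k (by omega)

lemma key_pow_one {p q k : ℕ} [Fact p.Prime] (hq : q.Prime) (hqk : ¬ q ∣ k)
    {y : ZMod p} (hyq : y ^ q = 1) : y ^ k = 1 ↔ y = 1 := by
  constructor
  · intro hyk
    have h1 : orderOf y ∣ q := orderOf_dvd_of_pow_eq_one hyq
    have h2 : orderOf y ∣ k := orderOf_dvd_of_pow_eq_one hyk
    have hcop : Nat.Coprime q k := (Nat.Prime.coprime_iff_not_dvd hq).mpr hqk
    have h3 : orderOf y ∣ Nat.gcd q k := Nat.dvd_gcd h1 h2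
    rw [hcop] at h3
    exact orderOf_eq_one_iff.mp (Nat.dvd_one.mp h3)
  · rintro rfl; simp

lemma inv_step {p k q : ℕ} [Fact p.Prime] (hk0 : k ≠ 0) (hq : q.Prime)
    (hqp : q ∣ (p - 1)) (hqk : ¬ q ∣ k) {a b : ZMod p}
    (ha : a ≠ 0) (hab : a ^ k = b ∨ b ^ k = a) :
    b ≠ 0 ∧ (a ^ ((p - 1) / q) = 1 ↔ b ^ ((p - 1) / q) = 1) := by
  have heq : (p - 1) / q * q = p - 1 := Nat.div_mul_cancel hqp
  rcases hab with h | h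
  · have hb : b ≠ 0 := h ▸ pow_ne_zero k ha
    have hyq : (a ^ ((p - 1) / q)) ^ q = 1 := by
      rw [← pow_mul, heq, ZMod.pow_card_sub_one_eq_one ha]
    have hbe : b ^ ((p - 1) / q) = (a ^ ((p - 1) / q)) ^ k := by
      rw [← h, ← pow_mul, ← pow_mul, mul_comm]
    refine ⟨hb, ?_⟩
    rw [hbe, key_pow_one hq hqk hyq]
  · have hb : b ≠ 0 := by rintro rfl; rw [zero_pow hk0] at h; exact ha h.symm
    have hyq : (b ^ ((p - 1) / q)) ^ q = 1 := by
      rw [← pow_mul, heq, ZMod.pow_card_sub_one_eq_one hb]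
    have hae : a ^ ((p - 1) / q) = (b ^ ((p - 1) / q)) ^ k := by
      rw [← h, ← pow_mul, ← pow_mul, mul_comm]
    refine ⟨hb, ?_⟩
    rw [hae, key_pow_one hq hqk hyq]

lemma inv_conn {p k q : ℕ} [Fact p.Prime] (hk0 : k ≠ 0) (hq : q.Prime)
    (hqp : q ∣ (p - 1)) (hqk : ¬ q ∣ k) {a b : ZMod p}
    (h : ConnGpk p k a b) (ha : a ≠ 0) :
    b ≠ 0 ∧ (a ^ ((p - 1) / q) = 1 ↔ b ^ ((p - 1) / q) = 1) := by
  induction h with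
  | refl => exact ⟨ha, Iff.rfl⟩
  | tail _ h2 ih =>
    obtain ⟨hb, hiff⟩ := ih
    obtain ⟨hc, hiff2⟩ := inv_step hk0 hq hqp hqk hb h2
    exact ⟨hc, hiff.trans hiff2⟩

/-- Let `k ≥ 2` be even and `p` an odd prime. The digraph `G_p^k`
has exactly two weakly connected components iff every prime factor of `p - 1`
divides `k`. -/
theorem stmt_15 (k p : ℕ) (hk : 2 ≤ k) (hke : Even k) (hp : p.Prime)
    (hodd : Odd p) :
    (∃ v w : ZMod p, ¬ ConnGpk p k v w ∧
      ∀ x : ZMod p, ConnGpk p k v x ∨ ConnGpk p k w x) ↔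
    (∀ q : ℕ, q.Prime → q ∣ (p - 1) → q ∣ k) := by
  haveI : Fact p.Prime := ⟨hp⟩
  have hk0 : k ≠ 0 := by omega
  have hp3 : 3 ≤ p := by
    rcases hodd with ⟨t, ht⟩
    have := hp.two_le
    omega
  constructor
  · rintro ⟨v, w, hvw, hcov⟩ q hq hqp
    by_contra hqk
    -- pick a generator g of the units
    obtain ⟨g, hg⟩ := IsCyclic.exists_generator (α := (ZMod p)ˣ)
    have hord : orderOf g = p - 1 := by
      rw [orderOf_eq_card_of_forall_mem_zpowers hg, Nat.card_eq_fintype_card,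
        ZMod.card_units_eq_totient, Nat.totient_prime hp]
    set e := (p - 1) / q with he
    have he0 : e ≠ 0 := by
      have h1 : q ≤ p - 1 := Nat.le_of_dvd (by omega) hqp
      have h2 := Nat.div_pos h1 hq.pos
      omega
    have helt : e < p - 1 := Nat.div_lt_self (by omega) hq.one_lt
    have hge : (g : ZMod p) ^ e ≠ 1 := by
      intro hcon
      have : g ^ e = 1 := by
        ext
        simpa using hcon
      have := orderOf_dvd_of_pow_eq_one this
      rw [hord] at this
      have := Nat.le_of_dvd (Nat.pos_of_ne_zero he0) this
      omega
    have hg0 : (g : ZMod p) ≠ 0 := Units.ne_zero g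
    have h10 : (1 : ZMod p) ≠ 0 := one_ne_zero
    -- pairwise disconnected: 0, 1, g
    have h01 : ¬ ConnGpk p k 0 1 := fun h => h10 (conn_zero hk0 h)
    have h0g : ¬ ConnGpk p k 0 (g : ZMod p) := fun h => hg0 (conn_zero hk0 h)
    have h1g : ¬ ConnGpk p k 1 (g : ZMod p) := by
      intro h
      have := (inv_conn hk0 hq hqp hqk h h10).2
      rw [one_pow] at this
      exact hge (this.mp rfl)
    -- pigeonhole
    have trans : ∀ a b c : ZMod p, ConnGpk p k a b → ConnGpk p k a c → ConnGpk p k b c :=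
      fun a b c h1 h2 => Relation.ReflTransGen.trans (conn_symm h1) h2
    rcases hcov 0 with hA | hA <;> rcases hcov 1 with hB | hB <;>
      rcases hcov (g : ZMod p) with hC | hC
    · exact h01 (trans v 0 1 hA hB)
    · exact h01 (trans v 0 1 hA hB)
    · exact h0g (trans v 0 g hA hC)
    · exact h1g (trans w 1 g hB hC)
    · exact h1g (trans v 1 g hB hC)
    · exact h0g (trans w 0 g hA hC)
    · exact h01 (trans w 0 1 hA hB)
    · exact h01 (trans w 0 1 hA hB)
  · intro hall
    refine ⟨0, 1, fun h => one_ne_zero (conn_zero hk0 h), fun x => ?_⟩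
    rcases eq_or_ne x 0 with rfl | hx
    · exact Or.inl Relation.ReflTransGen.refl
    · right
      have hdvd : (p - 1) ∣ k ^ (p - 1) := aux_dvd_pow (p - 1) (by omega) k hk0 hall
      obtain ⟨t, ht⟩ := hdvd
      have hx1 : x ^ (k ^ (p - 1)) = 1 := by
        rw [ht, pow_mul, ZMod.pow_card_sub_one_eq_one hx, one_pow]
      have := conn_pow (p := p) (k := k) x (p - 1)
      rw [hx1] at this
      exact conn_symm this
end

section
/- Let k be an even integer with k ≥ 2 and let p be an odd prime. Then the rainbow number rb(ℤ_p, x − y = z^k) equals 3 if every prime factor of p − 1 divides k, and equals 4 otherwise. -/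
open Finset

/-- Core number-theoretic lemma: if every prime of `n` divides `k` and `n < 2^p`, then `n ∣ k^p`. -/
lemma nt_gen (p k n : ℕ) (hk : 2 ≤ k) (hpos : 0 < n) (hsize : n < 2 ^ p)
    (hprimes : ∀ q : ℕ, q.Prime → q ∣ n → q ∣ k) : n ∣ k ^ p := by
  have hk0 : k ≠ 0 := by omega
  have hkp : k ^ p ≠ 0 := pow_ne_zero _ hk0
  rw [← Nat.factorization_le_iff_dvd hpos.ne' hkp]
  intro q
  by_cases hq : q ∈ n.factorization.support
  · have hqp : q.Prime := Nat.prime_of_mem_primeFactors (by simpa using hq)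
    have hqn : q ∣ n := Nat.dvd_of_mem_primeFactors (by simpa using hq)
    have hqk : q ∣ k := hprimes q hqp hqn
    have h1 : 0 < k.factorization q := hqp.factorization_pos_of_dvd hk0 hqk
    have h2 : n.factorization q < p := by
      by_contra hcon
      push_neg at hcon
      have := Nat.ordProj_dvd n q
      have h3 : q ^ p ≤ q ^ n.factorization q :=
        Nat.pow_le_pow_right hqp.pos hcon
      have h4 : q ^ n.factorization q ≤ n := Nat.le_of_dvd hpos (Nat.ordProj_dvd n q)
      have h5 : 2 ^ p ≤ q ^ p := Nat.pow_le_pow_left hqp.two_le p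
      omega
    have h6 : (k ^ p).factorization q = p * k.factorization q := by
      rw [Nat.factorization_pow]; simp
    rw [h6]
    calc n.factorization q ≤ p := h2.le
      _ = p * 1 := (mul_one p).symm
      _ ≤ p * k.factorization q := Nat.mul_le_mul_left p h1
  · simp [Finsupp.notMem_support_iff.mp hq]

section Zmod
variable (p k : ℕ) [Fact p.Prime]

/-- If `(z^k)^(k^p) = 1` then `z^(k^p) = 1`. -/
lemma t_root (hk : 2 ≤ k) (z : ZMod p) (h : (z ^ k) ^ k ^ p = 1) : z ^ k ^ p = 1 := by
  have hp : p.Prime := Fact.out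
  have hz : z ≠ 0 := by
    rintro rfl
    rw [zero_pow (by omega : k ≠ 0), zero_pow (pow_ne_zero _ (by omega : k ≠ 0))] at h
    exact one_ne_zero h.symm
  have h1 : z ^ (k ^ (p + 1)) = 1 := by
    rw [pow_succ, mul_comm, pow_mul]; exact h
  have hord1 : orderOf z ∣ k ^ (p + 1) := orderOf_dvd_iff_pow_eq_one.mpr h1
  have hord2 : orderOf z ∣ p - 1 :=
    orderOf_dvd_iff_pow_eq_one.mpr (ZMod.pow_card_sub_one_eq_one hz)
  have hpos : 0 < orderOf z := by
    rcases Nat.eq_zero_or_pos (orderOf z) with h0 | h0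
    · rw [h0] at hord2
      have := Nat.eq_zero_of_zero_dvd hord2
      have := hp.two_le
      omega
    · exact h0
  have hsize : orderOf z < 2 ^ p := by
    have h3 : orderOf z ≤ p - 1 := Nat.le_of_dvd (by have := hp.two_le; omega) hord2
    have h4 : p < 2 ^ p := Nat.lt_two_pow_self
    omega
  have : orderOf z ∣ k ^ p := by
    refine nt_gen p k _ hk hpos hsize ?_
    intro q hq hqd
    exact hq.dvd_of_dvd_pow (hqd.trans hord1)
  exact orderOf_dvd_iff_pow_eq_one.mp this

lemma t_neg_one (hke : Even k) (hk : 2 ≤ k) : (-1 : ZMod p) ^ k ^ p = 1 := by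
  refine Even.neg_one_pow ?_
  rw [Nat.even_pow]
  exact ⟨hke, (Fact.out : p.Prime).pos.ne'⟩

end Zmod

section Zmod2
variable {p k : ℕ} [Fact p.Prime]
variable {r : ℕ}

/-- no rainbow solution for x - y = z^k -/
def NoRb (p k : ℕ) {r : ℕ} (c : ZMod p → Fin r) : Prop :=
  ∀ b d : ZMod p, ¬(c (b + d ^ k) ≠ c b ∧ c (b + d ^ k) ≠ c d ∧ c b ≠ c d)

/-- a color class invariant under translation by `v ≠ 0` that is inhabited and avoided
somewhere gives a contradiction. -/
lemma fill {c : ZMod p → Fin r} (v : ZMod p) (hv : v ≠ 0) (m : Fin r)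
    (hstep : ∀ b, c b = m → c (b + v) = m)
    (b₀ : ZMod p) (hb₀ : c b₀ = m) (x : ZMod p) (hx : c x ≠ m) : False := by
  have key : ∀ n : ℕ, c (b₀ + (n : ZMod p) * v) = m := by
    intro n
    induction n with
    | zero => simpa using hb₀
    | succ n ih =>
      have : b₀ + ((n + 1 : ℕ) : ZMod p) * v = (b₀ + (n : ZMod p) * v) + v := by
        push_cast; ring
      rw [this]
      exact hstep _ ih
  apply hx
  have h1 : ((((x - b₀) * v⁻¹).val : ℕ) : ZMod p) = (x - b₀) * v⁻¹ :=
    ZMod.natCast_rightInverse _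
  have h2 : b₀ + ((((x - b₀) * v⁻¹).val : ℕ) : ZMod p) * v = x := by
    rw [h1]
    field_simp
    ring
  rw [← h2]
  exact key _

/-- Main scaling lemma: colors are invariant under multiplication by `k^j`-th roots of unity. -/
lemma scale {c : ZMod p → Fin r} (hc : NoRb p k c) (hsurj : Function.Surjective c)
    (hk : 2 ≤ k)
    (hthird : ∀ a b : Fin r, ∃ m : Fin r, m ≠ a ∧ m ≠ b) :
    ∀ (j : ℕ) (t y : ZMod p), t ^ k ^ j = 1 → c (t * y) = c y := by
  intro j
  induction j with
  | zero =>
    intro t y ht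
    simp only [pow_zero, pow_one] at ht
    rw [ht, one_mul]
  | succ j ih =>
    intro t y ht
    rcases eq_or_ne y 0 with rfl | hy
    · rw [mul_zero]
    by_contra hne
    have ht0 : t ≠ 0 := by
      rintro rfl
      rw [zero_pow (pow_ne_zero _ (by omega : k ≠ 0))] at ht
      exact one_ne_zero ht.symm
    set l := c y with hl
    set l' := c (t * y) with hl'
    obtain ⟨m, hm1, hm2⟩ := hthird l l'
    have hty : t * y ≠ 0 := mul_ne_zero ht0 hy
    set v := (t * y) ^ k with hv
    have hvne : v ≠ 0 := pow_ne_zero _ hty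
    -- u := t^k is a (k^j)-th root of unity
    have hu : (t ^ k) ^ k ^ j = 1 := by
      rw [← pow_mul, mul_comm k (k ^ j), ← pow_succ]
      exact ht
    have hu0 : t ^ k ≠ 0 := pow_ne_zero _ ht0
    have huinv : ((t ^ k)⁻¹) ^ k ^ j = 1 := by
      rw [inv_pow, hu, inv_one]
    have hstep : ∀ b, c b = m → c (b + v) = m := by
      intro b hb
      by_contra hbv
      -- witness 1 : d := t * y  (color l')
      have w1 := hc b (t * y)
      rw [← hv] at w1
      have hA : c (b + v) ≠ c b := by rw [hb]; exact hbv
      have hC : c b ≠ c (t * y) := by rw [hb, ← hl']; exact hm2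
      have hB : c (b + v) = l' := by
        by_contra hB'
        exact w1 ⟨hA, by rw [← hl']; exact hB', hC⟩
      -- witness 2 : d := y, after scaling by (t^k)⁻¹
      have e1 : c ((t ^ k)⁻¹ * (b + v)) = c (b + v) := ih ((t ^ k)⁻¹) (b + v) huinv
      have e2 : c ((t ^ k)⁻¹ * b) = c b := ih ((t ^ k)⁻¹) b huinv
      have e3 : (t ^ k)⁻¹ * (b + v) = (t ^ k)⁻¹ * b + y ^ k := by
        rw [hv, mul_pow, mul_add]
        congr 1
        rw [← mul_assoc, inv_mul_cancel₀ hu0, one_mul]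
      have w2 := hc ((t ^ k)⁻¹ * b) y
      rw [← e3] at w2
      have hA2 : c ((t ^ k)⁻¹ * (b + v)) ≠ c ((t ^ k)⁻¹ * b) := by
        rw [e1, e2, hb]; exact hbv
      have hC2 : c ((t ^ k)⁻¹ * b) ≠ c y := by rw [e2, hb, ← hl]; exact hm1
      have hB2 : c (b + v) = l := by
        by_contra hB'
        exact w2 ⟨hA2, by rw [e1, ← hl]; exact hB', hC2⟩
      rw [hB] at hB2
      exact hne hB2
    obtain ⟨b₀, hb₀⟩ := hsurj m
    exact fill v hvne m hstep b₀ hb₀ y (by rw [← hl]; exact fun h => hm1 h.symm)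

end Zmod2

section Zmod3
variable {p k : ℕ} [Fact p.Prime]
variable {r : ℕ}

/-- `v` carries label `l` -/
def Lbl (p k : ℕ) {r : ℕ} (c : ZMod p → Fin r) (l : Fin r) (v : ZMod p) : Prop :=
  ∃ t d : ZMod p, t ^ k ^ p = 1 ∧ d ≠ 0 ∧ c d = l ∧ v = t * d ^ k

variable {c : ZMod p → Fin r}

/-- rainbow-freeness extends to T-scaled powers. -/
lemma rprime (hk : 2 ≤ k) (hc : NoRb p k c)
    (hscale : ∀ t y : ZMod p, t ^ k ^ p = 1 → c (t * y) = c y)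
    {l : Fin r} {v : ZMod p} (hlbl : Lbl p k c l v) (b : ZMod p) :
    ¬(c (b + v) ≠ c b ∧ c (b + v) ≠ l ∧ c b ≠ l) := by
  obtain ⟨t, d, ht, hd, hcd, rfl⟩ := hlbl
  rintro ⟨h1, h2, h3⟩
  have ht0 : t ≠ 0 := by
    rintro rfl
    rw [zero_pow (pow_ne_zero _ (by omega : k ≠ 0))] at ht
    exact one_ne_zero ht.symm
  have htinv : (t⁻¹) ^ k ^ p = 1 := by rw [inv_pow, ht, inv_one]
  have e1 : c (t⁻¹ * (b + t * d ^ k)) = c (b + t * d ^ k) := hscale _ _ htinv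
  have e2 : c (t⁻¹ * b) = c b := hscale _ _ htinv
  have e3 : t⁻¹ * (b + t * d ^ k) = t⁻¹ * b + d ^ k := by
    rw [mul_add, ← mul_assoc, inv_mul_cancel₀ ht0, one_mul]
  exact hc (t⁻¹ * b) d ⟨by rw [← e3, e1, e2]; exact h1,
    by rw [← e3, e1, hcd]; exact h2, by rw [e2, hcd]; exact h3⟩

lemma lbl_ne_zero (hk : 2 ≤ k) {l : Fin r} {v : ZMod p} (hlbl : Lbl p k c l v) : v ≠ 0 := by
  obtain ⟨t, d, ht, hd, hcd, rfl⟩ := hlbl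
  have ht0 : t ≠ 0 := by
    rintro rfl
    rw [zero_pow (pow_ne_zero _ (by omega : k ≠ 0))] at ht
    exact one_ne_zero ht.symm
  exact mul_ne_zero ht0 (pow_ne_zero _ hd)

/-- step property: a color change along step `v` must involve the label of `v`. -/
lemma lbl_step (hk : 2 ≤ k) (hc : NoRb p k c)
    (hscale : ∀ t y : ZMod p, t ^ k ^ p = 1 → c (t * y) = c y)
    {l : Fin r} {v : ZMod p} (hlbl : Lbl p k c l v) (b : ZMod p)
    (hch : c (b + v) ≠ c b) : c b = l ∨ c (b + v) = l := by
  by_contra hcon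
  push_neg at hcon
  exact rprime hk hc hscale hlbl b ⟨hch, hcon.2, hcon.1⟩

/-- labels are unique. -/
lemma lbl_unique (hk : 2 ≤ k) (hc : NoRb p k c) (hsurj : Function.Surjective c)
    (hscale : ∀ t y : ZMod p, t ^ k ^ p = 1 → c (t * y) = c y)
    (hthird : ∀ a b : Fin r, ∃ m : Fin r, m ≠ a ∧ m ≠ b)
    {l₁ l₂ : Fin r} {v : ZMod p} (h₁ : Lbl p k c l₁ v) (h₂ : Lbl p k c l₂ v) : l₁ = l₂ := by
  by_contra hne
  obtain ⟨m, hm1, hm2⟩ := hthird l₁ l₂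
  have hstep : ∀ b, c b = m → c (b + v) = m := by
    intro b hb
    by_contra hbv
    have hch : c (b + v) ≠ c b := by rw [hb]; exact hbv
    have e1 := lbl_step hk hc hscale h₁ b hch
    have e2 := lbl_step hk hc hscale h₂ b hch
    rw [hb] at e1 e2
    rcases e1 with e1 | e1
    · exact hm1 e1
    rcases e2 with e2 | e2
    · exact hm2 e2
    exact hne (e1.symm.trans e2)
  have hvne := lbl_ne_zero hk h₁
  obtain ⟨t, d, ht, hd, hcd, hv⟩ := h₁
  obtain ⟨b₀, hb₀⟩ := hsurj m
  exact fill v hvne m hstep b₀ hb₀ d (by rw [hcd]; exact fun h => hm1 h.symm)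

open Classical in
/-- every class injects into its label set -/
lemma card_class_le_card_lbl (hk : 2 ≤ k) (l : Fin r) :
    ((univ : Finset (ZMod p)).filter (fun d => d ≠ 0 ∧ c d = l)).card ≤
    ((univ : Finset (ZMod p)).filter (fun v => Lbl p k c l v)).card := by
  classical
  set T : Finset (ZMod p) := (univ : Finset (ZMod p)).filter (fun t => t ^ k ^ p = 1) with hT
  set S : Finset (ZMod p) := (univ : Finset (ZMod p)).filter (fun d => d ≠ 0 ∧ c d = l) with hS
  set E : Finset (ZMod p) := (univ : Finset (ZMod p)).filter (fun v => Lbl p k c l v) with hE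
  have hTpos : 0 < T.card := by
    refine card_pos.mpr ⟨1, ?_⟩
    simp [hT]
  have key : S.card * T.card ≤ E.card * T.card := by
    refine card_mul_le_card_mul (fun d v => ∃ t ∈ T, v = t * d ^ k) ?_ ?_
    · -- each d ∈ S has at least |T| labeled elements above it
      intro d hd
      simp only [hS, mem_filter, mem_univ, true_and] at hd
      have himg : T.image (fun t => t * d ^ k) ⊆ bipartiteAbove (fun d v => ∃ t ∈ T, v = t * d ^ k) E d := by
        intro v hv
        simp only [mem_image] at hv
        obtain ⟨t, htT, rfl⟩ := hv
        simp only [Finset.mem_bipartiteAbove]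
        constructor
        · simp only [hE, mem_filter, mem_univ, true_and]
          refine ⟨t, d, ?_, hd.1, hd.2, rfl⟩
          simp only [hT, mem_filter, mem_univ, true_and] at htT
          exact htT
        · exact ⟨t, htT, rfl⟩
      calc T.card = (T.image (fun t => t * d ^ k)).card := by
                rw [card_image_of_injective]
                exact mul_left_injective₀ (pow_ne_zero _ hd.1)
        _ ≤ _ := card_le_card himg
    · -- each labeled v has at most |T| class elements below it
      intro v hv
      simp only [hE, mem_filter, mem_univ, true_and] at hv
      obtain ⟨t₀, d₀, ht₀, hd₀, hcd₀, hv₀⟩ := hv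
      refine le_trans (card_le_card_of_injOn (fun d => d * d₀⁻¹) ?_ ?_) le_rfl
      · intro d hd
        simp only [Finset.mem_coe, Finset.mem_bipartiteBelow] at hd
        obtain ⟨hdS, t, htT, hvt⟩ := hd
        simp only [hS, mem_filter, mem_univ, true_and] at hdS
        simp only [hT, Finset.mem_coe, mem_filter, mem_univ, true_and] at htT ⊢
        -- (d * d₀⁻¹)^k = t₀ * t⁻¹ ∈ T, then take k-th root
        have ht0 : t ≠ 0 := by
          rintro rfl
          rw [zero_pow (pow_ne_zero _ (by omega : k ≠ 0))] at htT
          exact one_ne_zero htT.symm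
        have heq : t * d ^ k = t₀ * d₀ ^ k := by rw [← hvt, hv₀]
        have hpow : (d * d₀⁻¹) ^ k = t₀ * t⁻¹ := by
          rw [mul_pow, inv_pow]
          field_simp
          try rw [mul_comm (d^k) t, mul_comm (d₀ ^ k) t₀]
          try exact heq
          try { rw [mul_comm (d^k) t]; exact heq }
        have : ((d * d₀⁻¹) ^ k) ^ k ^ p = 1 := by
          rw [hpow, mul_pow, ht₀, inv_pow, htT, inv_one, one_mul]
        exact t_root p k hk _ this
      · intro a _ b _ hab
        have hab' : a * d₀⁻¹ = b * d₀⁻¹ := hab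
        exact mul_left_injective₀ (inv_ne_zero hd₀) hab'
  exact Nat.le_of_mul_le_mul_right key hTpos

open Classical in
/-- every nonzero element has a label. -/
lemma lbl_cover (hk : 2 ≤ k) (hc : NoRb p k c) (hsurj : Function.Surjective c)
    (hscale : ∀ t y : ZMod p, t ^ k ^ p = 1 → c (t * y) = c y)
    (hthird : ∀ a b : Fin r, ∃ m : Fin r, m ≠ a ∧ m ≠ b)
    (v : ZMod p) (hv : v ≠ 0) : ∃ l : Fin r, Lbl p k c l v := by
  classical
  set E : Fin r → Finset (ZMod p) :=
    fun l => (univ : Finset (ZMod p)).filter (fun v => Lbl p k c l v) with hEdef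
  set B : Finset (ZMod p) := (univ : Finset (Fin r)).biUnion E with hB
  have hBsub : B ⊆ (univ : Finset (ZMod p)).erase 0 := by
    intro x hx
    simp only [hB, mem_biUnion] at hx
    obtain ⟨l, _, hx⟩ := hx
    simp only [hEdef, mem_filter] at hx
    exact mem_erase.mpr ⟨lbl_ne_zero hk hx.2, mem_univ x⟩
  have hcard : ((univ : Finset (ZMod p)).erase 0).card ≤ B.card := by
    have hdisj : ∀ l₁ ∈ (univ : Finset (Fin r)), ∀ l₂ ∈ (univ : Finset (Fin r)), l₁ ≠ l₂ →
        Disjoint (E l₁) (E l₂) := by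
      intro l₁ _ l₂ _ hne
      rw [Finset.disjoint_left]
      intro a ha₁ ha₂
      simp only [hEdef, mem_filter] at ha₁ ha₂
      exact hne (lbl_unique hk hc hsurj hscale hthird ha₁.2 ha₂.2)
    rw [hB, card_biUnion hdisj]
    have hS : ((univ : Finset (ZMod p)).erase 0).card =
        ∑ l ∈ (univ : Finset (Fin r)),
          ((univ : Finset (ZMod p)).filter (fun d => d ≠ 0 ∧ c d = l)).card := by
      rw [← card_biUnion]
      · congr 1
        ext x
        constructor
        · intro h
          exact mem_biUnion.mpr ⟨c x, mem_univ _,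
            mem_filter.mpr ⟨mem_univ _, (mem_erase.mp h).1, rfl⟩⟩
        · intro h
          obtain ⟨l, _, hx⟩ := mem_biUnion.mp h
          exact mem_erase.mpr ⟨(mem_filter.mp hx).2.1, mem_univ _⟩
      · intro l₁ _ l₂ _ hne
        rw [Function.onFun, Finset.disjoint_left]
        intro a ha₁ ha₂
        simp only [mem_filter] at ha₁ ha₂
        exact hne (ha₁.2.2 ▸ ha₂.2.2)
    rw [hS]
    exact Finset.sum_le_sum (fun l _ => card_class_le_card_lbl hk l)
  have : (univ : Finset (ZMod p)).erase 0 = B := eq_of_subset_of_card_le hBsub hcard |>.symm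
  have hvB : v ∈ B := by
    rw [← this]
    exact mem_erase.mpr ⟨hv, mem_univ v⟩
  simp only [hB, mem_biUnion, hEdef, mem_filter] at hvB
  obtain ⟨l, _, _, hl⟩ := hvB
  exact ⟨l, hl⟩

lemma reach_add (j x : ZMod p) : ∃ n : ℕ, x = j + (n : ZMod p) := by
  refine ⟨(x - j).val, ?_⟩
  rw [ZMod.natCast_rightInverse (x - j)]
  ring

lemma reach_sub (j x : ZMod p) : ∃ n : ℕ, x = j - (n : ZMod p) := by
  refine ⟨(j - x).val, ?_⟩
  rw [ZMod.natCast_rightInverse (j - x)]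
  ring

section Walks
variable {h : ZMod p → Fin r}

lemma walk1 {m : Fin r} {j x : ZMod p} (hj : h j = m) (hx : h x ≠ m) :
    ∃ β, h β = m ∧ h (β + 1) ≠ m := by
  by_contra hcon
  push_neg at hcon
  have key : ∀ n : ℕ, h (j + (n : ZMod p)) = m := by
    intro n
    induction n with
    | zero => simpa using hj
    | succ n ih =>
      have e : j + ((n + 1 : ℕ) : ZMod p) = (j + (n : ZMod p)) + 1 := by push_cast; ring
      rw [e]
      exact hcon _ ih
  obtain ⟨n, rfl⟩ := reach_add j x
  exact hx (key n)

lemma walk2_fwd {m : Fin r} {i x : ZMod p} (hi : h i = m) (hi1 : h (i + 1) = m) (hx : h x ≠ m) :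
    ∃ β, h (β - 1) = m ∧ h β = m ∧ h (β + 1) ≠ m := by
  by_contra hcon
  push_neg at hcon
  have key : ∀ n : ℕ, h (i + (n : ZMod p)) = m ∧ h (i + (n : ZMod p) + 1) = m := by
    intro n
    induction n with
    | zero => exact ⟨by simpa using hi, by simpa using hi1⟩
    | succ n ih =>
      have e1 : i + ((n + 1 : ℕ) : ZMod p) = i + (n : ZMod p) + 1 := by push_cast; ring
      have e2 : (i + (n : ZMod p) + 1) - 1 = i + (n : ZMod p) := by ring
      refine ⟨by rw [e1]; exact ih.2, ?_⟩
      rw [e1]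
      exact hcon (i + (n : ZMod p) + 1) (by rw [e2]; exact ih.1) ih.2
  obtain ⟨n, rfl⟩ := reach_add i x
  exact hx (key n).1

lemma walk2_bwd {m : Fin r} {i x : ZMod p} (hi : h i = m) (hi1 : h (i + 1) = m) (hx : h x ≠ m) :
    ∃ α, h (α - 1) ≠ m ∧ h α = m ∧ h (α + 1) = m := by
  by_contra hcon
  push_neg at hcon
  have key : ∀ n : ℕ, h (i - (n : ZMod p)) = m ∧ h (i - (n : ZMod p) + 1) = m := by
    intro n
    induction n with
    | zero => exact ⟨by simpa using hi, by simpa using hi1⟩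
    | succ n ih =>
      have e1 : i - ((n + 1 : ℕ) : ZMod p) = (i - (n : ZMod p)) - 1 := by push_cast; ring
      have e2 : (i - (n : ZMod p)) - 1 + 1 = i - (n : ZMod p) := by ring
      have hstep : h (i - (n : ZMod p) - 1) = m := by
        by_contra hA
        exact hcon (i - (n : ZMod p)) hA ih.1 ih.2
      exact ⟨by rw [e1]; exact hstep, by rw [e1, e2]; exact ih.1⟩
  obtain ⟨n, rfl⟩ := reach_sub i x
  exact hx (key n).1

end Walks

lemma fin4_third : ∀ w a b : Fin 4, a ≠ w → b ≠ w → a ≠ b →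
    ∃ e : Fin 4, e ≠ w ∧ e ≠ a ∧ e ≠ b := by decide

open Classical in
/-- No surjective 4-coloring of `ZMod p` is rainbow-free. -/
lemma four_false {p k : ℕ} [Fact p.Prime] (hk : 2 ≤ k) (c : ZMod p → Fin 4)
    (hc : NoRb p k c) (hsurj : Function.Surjective c) : False := by
  have hthird : ∀ a b : Fin 4, ∃ m : Fin 4, m ≠ a ∧ m ≠ b := by decide
  have hscale : ∀ t y : ZMod p, t ^ k ^ p = 1 → c (t * y) = c y :=
    fun t y ht => scale hc hsurj hk hthird p t y ht
  -- class sizes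
  set n : Fin 4 → ℕ := fun m => ((univ : Finset (ZMod p)).filter (fun v => c v = m)).card with hn
  -- world inequality
  have worldIneq : ∀ w : Fin 4, w ≠ c 0 →
      ∃ a b : Fin 4, a ≠ w ∧ b ≠ w ∧ a ≠ b ∧ n a + n b + 1 ≤ n w := by
    intro w hw
    obtain ⟨d, hd⟩ := hsurj w
    have hd0 : d ≠ 0 := by rintro rfl; exact hw hd.symm
    set s : ZMod p := d ^ k with hsdef
    have hs : s ≠ 0 := pow_ne_zero _ hd0
    have hlblw : Lbl p k c w s := ⟨1, d, one_pow _, hd0, hd, (one_mul _).symm⟩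
    set h : ZMod p → Fin 4 := fun i => c (i * s) with hhdef
    -- single-step change property
    have ch1 : ∀ i : ZMod p, h i ≠ h (i + 1) → h (i + 1) = w ∨ h i = w := by
      intro i hch
      have e : (i + 1) * s = i * s + s := by ring
      have := lbl_step hk hc hscale hlblw (i * s) (by rw [← e]; exact fun hh => hch (hh.symm))
      rcases this with h1 | h1
      · exact Or.inr h1
      · exact Or.inl (by rw [hhdef]; simp only []; rw [e]; exact h1)
    -- surjectivity of h
    have hsurjh : ∀ m : Fin 4, ∃ i, h i = m := by
      intro m
      obtain ⟨v, hv⟩ := hsurj m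
      refine ⟨v * s⁻¹, ?_⟩
      simp only [hhdef]
      rw [mul_assoc, inv_mul_cancel₀ hs, mul_one]
      exact hv
    -- general-step change property
    have chδ : ∀ (δ : ZMod p), δ ≠ 0 → ∃ l : Fin 4,
        ∀ j : ZMod p, h j ≠ h (j + δ) → h j = l ∨ h (j + δ) = l := by
      intro δ hδ
      obtain ⟨l, hl⟩ := lbl_cover hk hc hsurj hscale hthird (δ * s) (mul_ne_zero hδ hs)
      refine ⟨l, fun j hch => ?_⟩
      have e : (j + δ) * s = j * s + δ * s := by ring
      have := lbl_step hk hc hscale hl (j * s) (by rw [← e]; exact fun hh => hch hh.symm)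
      rcases this with h1 | h1
      · exact Or.inl h1
      · exact Or.inr (by rw [hhdef]; simp only []; rw [e]; exact h1)
    -- doubles dichotomy
    have dich : ∀ a b : Fin 4, a ≠ w → b ≠ w → a ≠ b →
        (∃ i, h i = a ∧ h (i + 1) = a) → (∃ i, h i = b ∧ h (i + 1) = b) → False := by
      rintro a b haw hbw hab ⟨i, hia, hia1⟩ ⟨i', hib, hib1⟩
      obtain ⟨xb, hxb⟩ := hsurjh b
      obtain ⟨xa, hxa⟩ := hsurjh a
      obtain ⟨β, hβ1, hβ2, hβ3⟩ := walk2_fwd hia hia1 (show h xb ≠ a by rw [hxb]; exact hab.symm)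
      obtain ⟨α, hα1, hα2, hα3⟩ := walk2_bwd hib hib1 (show h xa ≠ b by rw [hxa]; exact hab)
      have hβw : h (β + 1) = w := by
        rcases ch1 β (by rw [hβ2]; exact fun hh => hβ3 hh.symm) with h1 | h1
        · exact h1
        · rw [hβ2] at h1; exact absurd h1 haw
      have hαw : h (α - 1) = w := by
        rcases ch1 (α - 1) (by rw [sub_add_cancel, hα2]; exact hα1) with h1 | h1
        · rw [sub_add_cancel] at h1; rw [hα2] at h1; exact absurd h1 hbw
        · exact h1
      set δ : ZMod p := α - β with hδdef
      have hδ : δ ≠ 0 := by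
        rw [hδdef, sub_ne_zero]
        intro hEq
        rw [← hEq] at hβ2
        rw [hβ2] at hα2
        exact hab hα2
      obtain ⟨l, hl⟩ := chδ δ hδ
      have e0 : β + δ = α := by rw [hδdef]; ring
      have l_ab : l = a ∨ l = b := by
        rcases hl β (by rw [e0, hβ2, hα2]; exact hab) with h1 | h1
        · exact Or.inl (by rw [← hβ2]; exact h1.symm ▸ rfl)
        · exact Or.inr (by rw [e0] at h1; rw [← hα2]; exact h1.symm ▸ rfl)
      rcases l_ab with rfl | rfl
      · -- l = a : use positions β+1 and α+1
        have e1 : (β + 1) + δ = α + 1 := by rw [hδdef]; ring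
        have hch : h (β + 1) ≠ h ((β + 1) + δ) := by
          rw [e1, hβw, hα3]
          exact fun hh => hbw hh.symm
        rcases hl (β + 1) hch with h1 | h1
        · rw [hβw] at h1; exact haw h1.symm
        · rw [e1, hα3] at h1; exact hab h1.symm
      · -- l = b : use positions β-1 and α-1
        have e1 : (β - 1) + δ = α - 1 := by rw [hδdef]; ring
        have hch : h (β - 1) ≠ h ((β - 1) + δ) := by
          rw [e1, hβ1, hαw]
          exact haw
        rcases hl (β - 1) hch with h1 | h1
        · rw [hβ1] at h1; exact hab h1
        · rw [e1, hαw] at h1; exact hbw h1.symm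
    -- obtain two no-double colors
    set D : Fin 4 → Prop := fun m => ∃ i, h i = m ∧ h (i + 1) = m with hD
    set Wc : Finset (Fin 4) := (univ : Finset (Fin 4)).filter (fun m => m ≠ w) with hWc
    have hWc3 : Wc.card = 3 := by
      rw [hWc]
      rw [Finset.filter_ne' univ w]
      rw [Finset.card_erase_of_mem (mem_univ w)]
      simp
    set F : Finset (Fin 4) := Wc.filter (fun m => ¬ D m) with hF
    have hDcard : (Wc.filter (fun m => D m)).card ≤ 1 := by
      refine Finset.card_le_one.mpr ?_
      intro a ha b hb
      simp only [hWc, mem_filter, mem_univ, true_and] at ha hb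
      by_contra hne
      exact dich a b ha.1 hb.1 hne ha.2 hb.2
    have hF2 : 2 ≤ F.card := by
      have hkey := Finset.card_filter_add_card_filter_not (s := Wc) (p := fun m => D m)
      rw [← hF] at hkey
      omega
    obtain ⟨a, ha, b, hb, hab⟩ := Finset.one_lt_card.mp (by omega : 1 < F.card)
    simp only [hF, hWc, mem_filter, mem_univ, true_and] at ha hb
    refine ⟨a, b, ha.1, hb.1, hab, ?_⟩
    -- counting
    have poscard : ∀ m : Fin 4,
        ((univ : Finset (ZMod p)).filter (fun i => h i = m)).card = n m := by
      intro m
      rw [hn]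
      apply Finset.card_bij (fun i _ => i * s)
      · intro i hi
        simp only [mem_filter, mem_univ, true_and] at hi ⊢
        exact hi
      · intro i _ j _ hij
        exact mul_left_injective₀ hs hij
      · intro v hv
        simp only [mem_filter, mem_univ, true_and] at hv
        refine ⟨v * s⁻¹, ?_, ?_⟩
        · simp only [mem_filter, mem_univ, true_and, hhdef]
          rw [mul_assoc, inv_mul_cancel₀ hs, mul_one]
          exact hv
        · rw [mul_assoc, inv_mul_cancel₀ hs, mul_one]
    set A : Finset (ZMod p) := (univ : Finset (ZMod p)).filter (fun i => h i = a) with hA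
    set B : Finset (ZMod p) := (univ : Finset (ZMod p)).filter (fun i => h i = b) with hB
    set Wp : Finset (ZMod p) := (univ : Finset (ZMod p)).filter (fun i => h i = w) with hWp
    have himg : (A ∪ B).image (fun i => i + 1) ⊆ Wp := by
      intro x hx
      obtain ⟨i, hi, rfl⟩ := mem_image.mp hx
      have hiw : h (i + 1) = w := by
        rcases mem_union.mp hi with hi' | hi'
        · simp only [hA, mem_filter, mem_univ, true_and] at hi'
          have hne : h (i + 1) ≠ a := fun hh => ha.2 ⟨i, hi', hh⟩
          rcases ch1 i (by rw [hi']; exact fun hh => hne hh.symm) with h1 | h1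
          · exact h1
          · rw [hi'] at h1; exact absurd h1 ha.1
        · simp only [hB, mem_filter, mem_univ, true_and] at hi'
          have hne : h (i + 1) ≠ b := fun hh => hb.2 ⟨i, hi', hh⟩
          rcases ch1 i (by rw [hi']; exact fun hh => hne hh.symm) with h1 | h1
          · exact h1
          · rw [hi'] at h1; exact absurd h1 hb.1
      simp only [hWp, mem_filter, mem_univ, true_and]
      exact hiw
    -- extra element
    obtain ⟨e, he1, he2, he3⟩ : ∃ e : Fin 4, e ≠ w ∧ e ≠ a ∧ e ≠ b :=
      fin4_third w a b ha.1 hb.1 hab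
    obtain ⟨j₀, hj₀⟩ := hsurjh e
    obtain ⟨xw, hxw⟩ := hsurjh w
    obtain ⟨β₀, hβ₀1, hβ₀2⟩ := walk1 hj₀ (show h xw ≠ e by rw [hxw]; exact fun hh => he1 hh.symm)
    have hβ₀w : h (β₀ + 1) = w := by
      rcases ch1 β₀ (by rw [hβ₀1]; exact fun hh => hβ₀2 hh.symm) with h1 | h1
      · exact h1
      · rw [hβ₀1] at h1; exact absurd h1 he1
    have hnotmem : β₀ + 1 ∉ (A ∪ B).image (fun i => i + 1) := by
      intro hmem
      obtain ⟨i, hi, hieq⟩ := mem_image.mp hmem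
      have : i = β₀ := by
        have := add_right_cancel hieq
        exact this
      subst this
      rcases mem_union.mp hi with hi' | hi'
      · simp only [hA, mem_filter, mem_univ, true_and] at hi'
        rw [hβ₀1] at hi'; exact he2 hi'
      · simp only [hB, mem_filter, mem_univ, true_and] at hi'
        rw [hβ₀1] at hi'; exact he3 hi'
    have hins : insert (β₀ + 1) ((A ∪ B).image (fun i => i + 1)) ⊆ Wp := by
      intro x hx
      rcases mem_insert.mp hx with rfl | hx'
      · simp only [hWp, mem_filter, mem_univ, true_and]
        exact hβ₀w
      · exact himg hx'
    have hcount : A.card + B.card + 1 ≤ Wp.card := by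
      have h1 : (insert (β₀ + 1) ((A ∪ B).image (fun i => i + 1))).card =
          (A ∪ B).card + 1 := by
        rw [Finset.card_insert_of_notMem hnotmem,
          Finset.card_image_of_injective _ (add_left_injective 1)]
      have h2 : (A ∪ B).card = A.card + B.card := by
        rw [Finset.card_union_of_disjoint]
        rw [Finset.disjoint_left]
        intro x hxa hxb
        simp only [hA, hB, mem_filter, mem_univ, true_and] at hxa hxb
        exact hab (hxa ▸ hxb ▸ rfl)
      have := card_le_card hins
      omega
    rw [← poscard a, ← poscard b, ← poscard w]
    exact hcount
  -- final pigeonhole over the three colors ≠ c 0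
  set W3 : Finset (Fin 4) := (univ : Finset (Fin 4)).filter (fun m => m ≠ c 0) with hW3
  have hW3ne : W3.Nonempty := by
    obtain ⟨m, hm1, hm2⟩ := hthird (c 0) (c 0)
    exact ⟨m, by simp [hW3, hm1]⟩
  obtain ⟨w, hwW, hwmin⟩ := Finset.exists_min_image W3 n hW3ne
  simp only [hW3, mem_filter, mem_univ, true_and] at hwW
  obtain ⟨a, b, haw, hbw, hab, hineq⟩ := worldIneq w hwW
  by_cases ha0 : a = c 0
  · have hb0 : b ≠ c 0 := fun hb0 => hab (ha0.trans hb0.symm)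
    have := hwmin b (by simp [hW3, hb0])
    omega
  · have := hwmin a (by simp [hW3, ha0])
    omega

/-- Case A: if every prime of `p-1` divides `k`, no surjective 3-coloring is rainbow-free. -/
lemma three_false {p k : ℕ} [Fact p.Prime] (hk : 2 ≤ k) (hodd : Odd p)
    (hcond : ∀ q : ℕ, q.Prime → q ∣ (p - 1) → q ∣ k)
    (c : ZMod p → Fin 3) (hc : NoRb p k c) (hsurj : Function.Surjective c) : False := by
  have hp : p.Prime := Fact.out
  have hp3 : 3 ≤ p := by
    rcases hodd with ⟨m, hm⟩
    have := hp.two_le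
    omega
  have hthird : ∀ a b : Fin 3, ∃ m : Fin 3, m ≠ a ∧ m ≠ b := by decide
  have hscale : ∀ t y : ZMod p, t ^ k ^ p = 1 → c (t * y) = c y :=
    fun t y ht => scale hc hsurj hk hthird p t y ht
  have hdvd : p - 1 ∣ k ^ p := by
    refine nt_gen p k (p - 1) hk (by omega) ?_ hcond
    have : p < 2 ^ p := Nat.lt_two_pow_self
    omega
  have hall : ∀ x : ZMod p, x ≠ 0 → x ^ k ^ p = 1 := by
    intro x hx
    obtain ⟨t, ht⟩ := hdvd
    rw [ht, pow_mul, ZMod.pow_card_sub_one_eq_one hx, one_pow]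
  have hconst : ∀ x : ZMod p, x ≠ 0 → c x = c 1 := by
    intro x hx
    have := hscale x 1 (hall x hx)
    rw [mul_one] at this
    exact this
  obtain ⟨m, hm1, hm2⟩ := hthird (c 0) (c 1)
  obtain ⟨v, hv⟩ := hsurj m
  rcases eq_or_ne v 0 with rfl | hvne
  · exact hm1 hv.symm
  · rw [hconst v hvne] at hv
    exact hm2 hv.symm

/-- Case B: the `T`-coloring is surjective and rainbow-free. -/
lemma caseB_coloring {p k : ℕ} [Fact p.Prime] (hk : 2 ≤ k) (hke : Even k) (hodd : Odd p)
    {q : ℕ} (hq : q.Prime) (hqp : q ∣ (p - 1)) (hqk : ¬ q ∣ k) :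
    ∃ c : ZMod p → Fin 3, Function.Surjective c ∧ NoRb p k c := by
  have hp : p.Prime := Fact.out
  have hp3 : 3 ≤ p := by
    rcases hodd with ⟨m, hm⟩
    have := hp.two_le
    omega
  classical
  refine ⟨fun v => if v = 0 then 0 else if v ^ k ^ p = 1 then 1 else 2, ?_, ?_⟩
  · -- surjectivity
    intro m
    fin_cases m
    · exact ⟨0, by simp⟩
    · refine ⟨1, ?_⟩
      have h1 : (1 : ZMod p) ≠ 0 := one_ne_zero
      simp [h1]
    · -- element of order q
      haveI : Fact q.Prime := ⟨hq⟩
      obtain ⟨u, hu⟩ := exists_prime_orderOf_dvd_card (G := (ZMod p)ˣ) q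
        (by rw [ZMod.card_units]; exact hqp)
      have hx0 : (u : ZMod p) ≠ 0 := Units.ne_zero u
      have hord : orderOf (u : ZMod p) = q := by rw [orderOf_units, hu]
      have hxne : (u : ZMod p) ^ k ^ p ≠ 1 := by
        intro hcon
        have : orderOf (u : ZMod p) ∣ k ^ p := orderOf_dvd_iff_pow_eq_one.mpr hcon
        rw [hord] at this
        exact hqk (hq.dvd_of_dvd_pow this)
      exact ⟨(u : ZMod p), by simp [hx0, hxne]⟩
  · -- rainbow-free
    intro b d hrb
    obtain ⟨h1, h2, h3⟩ := hrb
    rcases eq_or_ne d 0 with rfl | hd0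
    · rw [zero_pow (by omega : k ≠ 0), add_zero] at h1
      exact h1 rfl
    have hdk0 : d ^ k ≠ 0 := pow_ne_zero _ hd0
    have hiff : ∀ z : ZMod p, z ≠ 0 → ((z ^ k) ^ k ^ p = 1 ↔ z ^ k ^ p = 1) := by
      intro z hz
      constructor
      · exact t_root p k hk z
      · intro hz1
        rw [← pow_mul, mul_comm, pow_mul, hz1, one_pow]
    rcases eq_or_ne b 0 with rfl | hb0
    · -- triple (d^k, 0, d): colors of d^k and d agree
      rw [zero_add] at h2
      apply h2
      show (if d ^ k = 0 then (0:Fin 3) else if (d ^ k) ^ k ^ p = 1 then 1 else 2)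
          = (if d = 0 then (0:Fin 3) else if d ^ k ^ p = 1 then 1 else 2)
      rw [if_neg hdk0, if_neg hd0]
      by_cases hcase : d ^ k ^ p = 1
      · rw [if_pos ((hiff d hd0).mpr hcase), if_pos hcase]
      · rw [if_neg (fun hcon => hcase ((hiff d hd0).mp hcon)), if_neg hcase]
    rcases eq_or_ne (b + d ^ k) 0 with hbd | hbd
    · -- triple (0, -d^k, d): colors of b = -d^k and d agree
      apply h3
      have hb : b = - d ^ k := by linear_combination hbd
      have hpow : b ^ k ^ p = (d ^ k) ^ k ^ p := by
        rw [hb, neg_pow]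
        have : Even (k ^ p) := by
          rw [Nat.even_pow]
          exact ⟨hke, hp.pos.ne'⟩
        rw [this.neg_one_pow, one_mul]
      show (if b = 0 then (0:Fin 3) else if b ^ k ^ p = 1 then 1 else 2)
          = (if d = 0 then (0:Fin 3) else if d ^ k ^ p = 1 then 1 else 2)
      rw [if_neg hb0, if_neg hd0]
      by_cases hcase : d ^ k ^ p = 1
      · rw [if_pos, if_pos hcase]
        rw [hpow]
        exact (hiff d hd0).mpr hcase
      · rw [if_neg, if_neg hcase]
        rw [hpow]
        exact fun hcon => hcase ((hiff d hd0).mp hcon)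
    · -- all three nonzero: colors in {1, 2}
      have hval : ∀ z : ZMod p, z ≠ 0 →
          (if z = 0 then (0 : Fin 3) else if z ^ k ^ p = 1 then 1 else 2) = 1 ∨
          (if z = 0 then (0 : Fin 3) else if z ^ k ^ p = 1 then 1 else 2) = 2 := by
        intro z hz
        rw [if_neg hz]
        by_cases hcase : z ^ k ^ p = 1
        · exact Or.inl (if_pos hcase)
        · exact Or.inr (if_neg hcase)
      have v1 := hval _ hbd
      have v2 := hval _ hb0
      have v3 := hval _ hd0
      rcases v1 with v1 | v1 <;> rcases v2 with v2 | v2 <;> rcases v3 with v3 | v3 <;>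
        first
        | exact h1 (v1.trans v2.symm)
        | exact h2 (v1.trans v3.symm)
        | exact h3 (v2.trans v3.symm)

end Zmod3

lemma fin2_no_three : ∀ x y z : Fin 2, x ≠ y → x ≠ z → y ≠ z → False := by decide

/-- The set of numbers of colors `r > 0` such that every exact `r`-coloring of
`ℤ_p` contains a rainbow solution to `x - y = z^k`; the rainbow number
`rb(ℤ_p, x - y = z^k)` is its least element. -/
def RainbowSet (p k : ℕ) : Set ℕ :=
  {r : ℕ | 0 < r ∧ ∀ c : ZMod p → Fin r, Function.Surjective c →
    ∃ b d : ZMod p, c (b + d ^ k) ≠ c b ∧ c (b + d ^ k) ≠ c d ∧ c b ≠ c d}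

/-- Let `k ≥ 2` be even and `p` an odd prime. Then
`rb(ℤ_p, x - y = z^k) = 3` if every prime factor of `p - 1` divides `k`, and
`rb(ℤ_p, x - y = z^k) = 4` otherwise. -/
theorem stmt_17 (k p : ℕ) (hk : 2 ≤ k) (hke : Even k) (hp : p.Prime)
    (hodd : Odd p) :
    ((∀ q : ℕ, q.Prime → q ∣ (p - 1) → q ∣ k) → IsLeast (RainbowSet p k) 3) ∧
    (¬ (∀ q : ℕ, q.Prime → q ∣ (p - 1) → q ∣ k) → IsLeast (RainbowSet p k) 4) := by
  haveI : Fact p.Prime := ⟨hp⟩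
  have hp3 : 3 ≤ p := by
    rcases hodd with ⟨m, hm⟩
    have := hp.two_le
    omega
  classical
  -- small color counts are never in the rainbow set
  have hnot1 : (1 : ℕ) ∉ RainbowSet p k := by
    rintro ⟨-, h⟩
    obtain ⟨b, d, h1, -, -⟩ := h (fun _ => 0) (fun y => ⟨0, Subsingleton.elim _ _⟩)
    exact h1 rfl
  have hnot2 : (2 : ℕ) ∉ RainbowSet p k := by
    rintro ⟨-, h⟩
    have hsurj2 : Function.Surjective (fun v : ZMod p => if v = 0 then (0 : Fin 2) else 1) := by
      intro m
      fin_cases m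
      · exact ⟨0, by simp⟩
      · exact ⟨1, by simp⟩
    obtain ⟨b, d, h1, h2, h3⟩ := h _ hsurj2
    exact fin2_no_three _ _ _ h1 h2 h3
  constructor
  · -- Case A
    intro hA
    constructor
    · refine ⟨by norm_num, ?_⟩
      intro c hsurj
      by_contra hno
      have hcNoRb : NoRb p k c := fun b d hbd => hno ⟨b, d, hbd⟩
      exact absurd (three_false hk hodd hA c hcNoRb hsurj) not_false
    · intro r hr
      by_contra hlt
      push_neg at hlt
      have hpos := hr.1
      interval_cases r
      · exact hnot1 hr
      · exact hnot2 hr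
  · -- Case B
    intro hB
    push_neg at hB
    obtain ⟨q, hq, hqp, hqk⟩ := hB
    constructor
    · refine ⟨by norm_num, ?_⟩
      intro c hsurj
      by_contra hno
      have hcNoRb : NoRb p k c := fun b d hbd => hno ⟨b, d, hbd⟩
      exact absurd (four_false hk c hcNoRb hsurj) not_false
    · intro r hr
      by_contra hlt
      push_neg at hlt
      have hpos := hr.1
      interval_cases r
      · exact hnot1 hr
      · exact hnot2 hr
      · obtain ⟨c₀, hc₀surj, hc₀NoRb⟩ := caseB_coloring hk hke hodd hq hqp hqk
        obtain ⟨b, d, hbd⟩ := hr.2 c₀ hc₀surj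
        exact hc₀NoRb b d hbd
end
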